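/- arXiv:quant-ph/0404079 — 6 statements merged into one kernel-verified Lean document; each statement's English description precedes it below -/
import Mathlib

section
/- Let H be a finite-dimensional Hilbert space, N_A a self-adjoint operator on H, and {M_i} a finite family of operators with ∑ M_i† M_i = 1 and [N_A, M_i] = 0 for all i. Then for any unit vector φ, ∑_i ⟨φ|M_i† N_A² M_i|φ⟩ = ⟨φ|N_A²|φ⟩, and ∑_i ⟨φ|M_i† N_A M_i|φ⟩²/⟨φ|M_i† M_i|φ⟩ ≥ ⟨φ|N_A|φ⟩², where terms with ⟨φ|M_i† M_i|φ⟩ = 0 are omitted. Consequently the average variance ∑_i [⟨φ|M_i† N_A² M_i|φ⟩ − ⟨φ|M_i† N_A M_i|φ⟩²/⟨φ|M_i† M_i|φ⟩] is at most ⟨φ|N_A²|φ⟩ − ⟨φ|N_A|φ⟩². -/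
/-! Both claims about the measurement reduce to operator identities: an operator `A` commuting
with every Kraus operator satisfies `∑ Mᵢ† A Mᵢ = ∑ Mᵢ† Mᵢ A = A`, which for `A = N_A²` is the
first claim and for `A = N_A` says that the expectations `eᵢ = ⟨φ|Mᵢ† N_A Mᵢ|φ⟩` add up to
`⟨φ|N_A|φ⟩`. The outcome probabilities `pᵢ = ⟨φ|Mᵢ† Mᵢ|φ⟩` are nonnegative, sum to `1`, and
`pᵢ = 0` forces `Mᵢ φ = 0`, hence `eᵢ = 0`; Cauchy–Schwarz then gives
`(∑ eᵢ)² ≤ (∑ eᵢ²/pᵢ) (∑ pᵢ) = ∑ eᵢ²/pᵢ`. -/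

open Matrix

/-- Expectation value `⟨φ|A|φ⟩` (real part) of an operator on `ℂ^d`. -/
noncomputable def expVal {d : ℕ} (A : Matrix (Fin d) (Fin d) ℂ) (φ : Fin d → ℂ) : ℝ :=
  (star φ ⬝ᵥ (A *ᵥ φ)).re

theorem Finset.sq_sum_le_sum_sq_div_mul_sum {ι R : Type*} [Field R] [LinearOrder R]
    [IsStrictOrderedRing R] (s : Finset ι) {e p : ι → R} (hp : ∀ i ∈ s, 0 ≤ p i)
    (he : ∀ i ∈ s, p i = 0 → e i = 0) :
    (∑ i ∈ s, e i) ^ 2 ≤ (∑ i ∈ s, e i ^ 2 / p i) * ∑ i ∈ s, p i := by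
  refine Finset.sum_sq_le_sum_mul_sum_of_sq_le_mul s
    (fun i hi => div_nonneg (sq_nonneg _) (hp i hi)) hp fun i hi => ?_
  by_cases hpi : p i = 0
  · simp [hpi, he i hi hpi]
  · rw [div_mul_cancel₀ _ hpi]

theorem Matrix.sum_conjTranspose_mul_mul_of_commute {ι n R : Type*} [Fintype ι] [Fintype n]
    [DecidableEq n] [Semiring R] [StarRing R] {M : ι → Matrix n n R}
    (hM : ∑ i, (M i)ᴴ * M i = 1) {A : Matrix n n R} (hA : ∀ i, A * M i = M i * A) :
    ∑ i, (M i)ᴴ * A * M i = A := by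
  calc ∑ i, (M i)ᴴ * A * M i = ∑ i, (M i)ᴴ * M i * A :=
        Finset.sum_congr rfl fun i _ => by rw [mul_assoc, hA, ← mul_assoc]
    _ = A := by rw [← Finset.sum_mul, hM, one_mul]

section expVal

open scoped ComplexOrder

variable {d : ℕ}

theorem expVal_sum {ι : Type*} (s : Finset ι) (A : ι → Matrix (Fin d) (Fin d) ℂ)
    (φ : Fin d → ℂ) : expVal (∑ i ∈ s, A i) φ = ∑ i ∈ s, expVal (A i) φ := by
  simp only [expVal, sum_mulVec, dotProduct_sum, Complex.re_sum]

theorem expVal_conjTranspose_mul_mul (A B : Matrix (Fin d) (Fin d) ℂ) (φ : Fin d → ℂ) :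
    expVal (Bᴴ * A * B) φ = expVal A (B *ᵥ φ) := by
  simp only [expVal, ← mulVec_mulVec, star_mulVec, dotProduct_mulVec (star φ) Bᴴ]

theorem expVal_one (φ : Fin d → ℂ) : expVal 1 φ = (star φ ⬝ᵥ φ).re := by
  rw [expVal, one_mulVec]

theorem expVal_one_nonneg (φ : Fin d → ℂ) : 0 ≤ expVal 1 φ := by
  rw [expVal_one]
  exact Complex.nonneg_iff.mp (dotProduct_star_self_nonneg φ) |>.1

theorem expVal_one_eq_zero_iff {φ : Fin d → ℂ} : expVal 1 φ = 0 ↔ φ = 0 := by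
  have him := (Complex.nonneg_iff.mp (dotProduct_star_self_nonneg φ)).2
  rw [expVal_one, ← dotProduct_star_self_eq_zero, Complex.ext_iff]
  simp [← him]

theorem expVal_conjTranspose_mul_self (B : Matrix (Fin d) (Fin d) ℂ) (φ : Fin d → ℂ) :
    expVal (Bᴴ * B) φ = expVal 1 (B *ᵥ φ) := by
  rw [← expVal_conjTranspose_mul_mul, mul_one]

theorem expVal_conjTranspose_mul_self_nonneg (B : Matrix (Fin d) (Fin d) ℂ) (φ : Fin d → ℂ) :
    0 ≤ expVal (Bᴴ * B) φ :=
  expVal_conjTranspose_mul_self B φ ▸ expVal_one_nonneg _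

theorem expVal_conjTranspose_mul_mul_eq_zero {A B : Matrix (Fin d) (Fin d) ℂ} {φ : Fin d → ℂ}
    (h : expVal (Bᴴ * B) φ = 0) : expVal (Bᴴ * A * B) φ = 0 := by
  rw [expVal_conjTranspose_mul_self, expVal_one_eq_zero_iff] at h
  rw [expVal_conjTranspose_mul_mul, h]
  simp [expVal]

end expVal

theorem siv_monotone_general {d k : ℕ} (NA : Matrix (Fin d) (Fin d) ℂ)
    (M : Fin k → Matrix (Fin d) (Fin d) ℂ)
    (hsum : ∑ i, (M i)ᴴ * M i = 1)
    (hcomm : ∀ i, NA * M i = M i * NA)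
    (φ : Fin d → ℂ) (hφ : star φ ⬝ᵥ φ = 1) :
    (∑ i, expVal ((M i)ᴴ * (NA * NA) * M i) φ = expVal (NA * NA) φ) ∧
    (∑ i, (if expVal ((M i)ᴴ * M i) φ = 0 then 0 else
        (expVal ((M i)ᴴ * NA * M i) φ) ^ 2 / expVal ((M i)ᴴ * M i) φ)
      ≥ (expVal NA φ) ^ 2) ∧
    (∑ i, (expVal ((M i)ᴴ * (NA * NA) * M i) φ -
        (if expVal ((M i)ᴴ * M i) φ = 0 then 0 else
          (expVal ((M i)ᴴ * NA * M i) φ) ^ 2 / expVal ((M i)ᴴ * M i) φ))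
      ≤ expVal (NA * NA) φ - (expVal NA φ) ^ 2) := by
  have hcomm_sq : ∀ i, NA * NA * M i = M i * (NA * NA) := fun i =>
    Commute.mul_left (hcomm i) (hcomm i)
  have second_moment : ∑ i, expVal ((M i)ᴴ * (NA * NA) * M i) φ = expVal (NA * NA) φ := by
    rw [← expVal_sum, sum_conjTranspose_mul_mul_of_commute hsum hcomm_sq]
  have prob_sum : ∑ i, expVal ((M i)ᴴ * M i) φ = 1 := by
    rw [← expVal_sum, hsum, expVal_one, hφ, Complex.one_re]
  have first_moment : ∑ i, expVal ((M i)ᴴ * NA * M i) φ = expVal NA φ := by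
    rw [← expVal_sum, sum_conjTranspose_mul_mul_of_commute hsum hcomm]
  -- the guard is harmless: `x / 0 = 0` in Lean
  have hite : ∀ x y : ℝ, (if y = 0 then 0 else x / y) = x / y := fun x y => by
    split_ifs with hy <;> simp [hy]
  have mean_sq : (∑ i, (if expVal ((M i)ᴴ * M i) φ = 0 then 0 else
      (expVal ((M i)ᴴ * NA * M i) φ) ^ 2 / expVal ((M i)ᴴ * M i) φ)) ≥ (expVal NA φ) ^ 2 := by
    simpa only [hite, first_moment, prob_sum, mul_one] using
      Finset.univ.sq_sum_le_sum_sq_div_mul_sum (e := fun i => expVal ((M i)ᴴ * NA * M i) φ)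
        (fun i _ => expVal_conjTranspose_mul_self_nonneg (M i) φ)
        (fun i _ => expVal_conjTranspose_mul_mul_eq_zero)
  refine ⟨second_moment, mean_sq, ?_⟩
  rw [Finset.sum_sub_distrib, second_moment]
  exact sub_le_sub_left mean_sq _

/-- SiV is an entanglement monotone: for Kraus operators `M i` with
`∑ Mᵢ† Mᵢ = 1` commuting with the self-adjoint `N_A`, and a unit vector `φ`,
the first moment identity, the Cauchy–Schwarz bound for the second term, and
the resulting bound on the average variance all hold. -/
theorem siv_monotone {d k : ℕ} (NA : Matrix (Fin d) (Fin d) ℂ)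
    (hNA : NA.IsHermitian) (M : Fin k → Matrix (Fin d) (Fin d) ℂ)
    (hsum : ∑ i, (M i)ᴴ * M i = 1)
    (hcomm : ∀ i, NA * M i = M i * NA)
    (φ : Fin d → ℂ) (hφ : star φ ⬝ᵥ φ = 1) :
    (∑ i, expVal ((M i)ᴴ * (NA * NA) * M i) φ = expVal (NA * NA) φ) ∧
    (∑ i, (if expVal ((M i)ᴴ * M i) φ = 0 then 0 else
        (expVal ((M i)ᴴ * NA * M i) φ) ^ 2 / expVal ((M i)ᴴ * M i) φ)
      ≥ (expVal NA φ) ^ 2) ∧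
    (∑ i, (expVal ((M i)ᴴ * (NA * NA) * M i) φ -
        (if expVal ((M i)ᴴ * M i) φ = 0 then 0 else
          (expVal ((M i)ᴴ * NA * M i) φ) ^ 2 / expVal ((M i)ᴴ * M i) φ))
      ≤ expVal (NA * NA) φ - (expVal NA φ) ^ 2) :=
  siv_monotone_general NA M hsum hcomm φ hφ
end

section
/- Let H_A, H_B be finite-dimensional Hilbert spaces decomposed as direct sums H_A = ⊕_{i=0}^{N} H_A^i and H_B = ⊕_{j=0}^{N} H_B^j, with P_i^A, P_j^B the orthogonal projectors onto the summands. Let ψ ∈ H_A ⊗ H_B be a unit vector supported on ⊕_{n=0}^{N} ⊕_{i+j=n} H_A^i ⊗ H_B^j, and let P_n = ∑_{i+j=n} P_i^A ⊗ P_j^B. Then ∑_{n=0}^{N} ⟨ψ|P_n|ψ⟩ · E(P_n ψ / ‖P_n ψ‖) ≤ E(ψ) + log₂(N+1), where E(χ) denotes the entropy of entanglement, i.e., the von Neumann entropy of the reduced state tr_B |χ⟩⟨χ| (and terms with P_n ψ = 0 are omitted). -/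
open Matrix

/-- Von Neumann entropy (base 2) of a Hermitian matrix, via its eigenvalues. -/
noncomputable def vnEntropy {ι : Type*} [Fintype ι] [DecidableEq ι]
    (ρ : Matrix ι ι ℂ) : ℝ :=
  if h : ρ.IsHermitian then -∑ i, h.eigenvalues i * Real.logb 2 (h.eigenvalues i)
  else 0

/-- Reduced density matrix `tr_B |χ⟩⟨χ|` of a (not necessarily normalized)
bipartite vector `χ`. -/
noncomputable def redA {A B : Type*} [Fintype A] [Fintype B]
    (χ : A × B → ℂ) : Matrix A A ℂ :=
  Matrix.of fun a a' => ∑ b, χ (a, b) * star (χ (a', b))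

/-- Entropy of entanglement of a bipartite vector. -/
noncomputable def entE {A B : Type*} [Fintype A] [Fintype B] [DecidableEq A]
    (χ : A × B → ℂ) : ℝ :=
  vnEntropy (redA χ)

/-- Squared norm of a vector. -/
noncomputable def nrmSq {ι : Type*} [Fintype ι] (χ : ι → ℂ) : ℝ :=
  ∑ p, Complex.normSq (χ p)

/-- Projection of `ψ` onto the subspace of total particle number `n`. -/
noncomputable def projN {A B : Type*} (nA : A → ℕ) (nB : B → ℕ) (n : ℕ)
    (ψ : A × B → ℂ) : A × B → ℂ :=
  fun p => if nA p.1 + nB p.2 = n then ψ p else 0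

/-!
Write `ρₙ` for the (unnormalized) reduced state of `Pₙψ` on `A` and `pₙ = tr ρₙ`, and
`H(p) = -p log₂ p`. The `n`-th term on the left is `S(ρₙ) - H(pₙ)`, so concavity of the von
Neumann entropy, in the form `∑ S(ρₙ) ≤ S(∑ ρₙ) + ∑ H(pₙ)`, bounds the left side by `S(∑ ρₙ)`.
Since `ψ` carries at most `N` particles, `∑ ρₙ` is the reduced state `ρ_A` of `ψ` pinched by the
particle-number projectors `Q₀, …, Q_N` of `A`. Recording the label `k` in a register on the
`B` side purifies the pinched state; the complementary reduced state is block diagonal with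
blocks `σₖ = ψ† Qₖ ψ` summing to `ρ_B`. Concavity once more gives
`∑ S(σₖ) ≤ S(ρ_B) + ∑ H(tr σₖ) ≤ S(ρ_A) + log₂ (N + 1)`.
Entropies are compared through characteristic polynomials, `M M†` and `M† M` having the same
nonzero spectrum.
-/

open Polynomial
open scoped ComplexOrder

noncomputable def negMulLogb (x : ℝ) : ℝ := -(x * Real.logb 2 x)

@[simp] lemma negMulLogb_zero : negMulLogb 0 = 0 := by simp [negMulLogb]

lemma negMulLogb_eq (x : ℝ) : negMulLogb x = Real.negMulLog x / Real.log 2 := by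
  simp only [negMulLogb, Real.negMulLog, Real.logb]
  ring

lemma negMulLogb_mul (x y : ℝ) : negMulLogb (x * y) = y * negMulLogb x + x * negMulLogb y := by
  simp only [negMulLogb_eq, Real.negMulLog_mul]
  ring

lemma concaveOn_negMulLogb : ConcaveOn ℝ (Set.Ici 0) negMulLogb := by
  have h : negMulLogb = (Real.log 2)⁻¹ • Real.negMulLog := by
    ext x
    rw [negMulLogb_eq, Pi.smul_apply, smul_eq_mul, div_eq_inv_mul]
  rw [h]
  exact Real.concaveOn_negMulLog.smul (by positivity)

lemma sum_negMulLogb_le_logb_card {κ : Type*} [Fintype κ] [Nonempty κ] {q : κ → ℝ}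
    (hq : ∀ k, 0 ≤ q k) (hsum : ∑ k, q k = 1) :
    ∑ k, negMulLogb (q k) ≤ Real.logb 2 (Fintype.card κ) := by
  set n : ℝ := (Fintype.card κ : ℝ)
  have hn : 0 < n := by positivity
  have hJ := concaveOn_negMulLogb.le_map_sum (t := Finset.univ) (w := fun _ => n⁻¹) (p := q)
    (fun _ _ => by positivity) (by simp [n]) (fun k _ => hq k)
  simp only [smul_eq_mul, ← Finset.mul_sum, hsum, mul_one] at hJ
  have hinv : negMulLogb n⁻¹ = n⁻¹ * Real.logb 2 n := by
    rw [negMulLogb, Real.logb_inv]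
    ring
  rw [hinv] at hJ
  exact le_of_mul_le_mul_left hJ (inv_pos.mpr hn)

/-- Jensen for `negMulLogb` with weights `t k` at the points `y k / t k`. -/
lemma sum_negMulLogb_add_mul_logb_le {κ : Type*} (s : Finset κ) {t y : κ → ℝ}
    (hy : ∀ k ∈ s, 0 ≤ y k) (hyt : ∀ k ∈ s, y k ≤ t k) (ht : ∑ k ∈ s, t k = 1) :
    ∑ k ∈ s, (negMulLogb (y k) + y k * Real.logb 2 (t k))
      ≤ negMulLogb (∑ k ∈ s, y k) := by
  have hcancel : ∀ k ∈ s, t k * (y k / t k) = y k := fun k hk => by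
    rcases (hy k hk).eq_or_lt with h0 | hpos
    · simp [← h0]
    · exact mul_div_cancel₀ _ (hpos.trans_le (hyt k hk)).ne'
  have hterm : ∀ k ∈ s, negMulLogb (y k) + y k * Real.logb 2 (t k)
      = t k • negMulLogb (y k / t k) := fun k hk => by
    calc negMulLogb (y k) + y k * Real.logb 2 (t k)
        = y k / t k * negMulLogb (t k) + t k * negMulLogb (y k / t k)
            + t k * (y k / t k) * Real.logb 2 (t k) := by
          rw [← negMulLogb_mul, hcancel k hk]
      _ = t k • negMulLogb (y k / t k) := by
          rw [negMulLogb, smul_eq_mul]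
          ring
  rw [Finset.sum_congr rfl hterm, ← Finset.sum_congr rfl hcancel]
  exact concaveOn_negMulLogb.le_map_sum (fun k hk => (hy k hk).trans (hyt k hk)) ht
    (fun k hk => div_nonneg (hy k hk) ((hy k hk).trans (hyt k hk)))

section Spectrum

variable {ι κ : Type*} [Fintype ι] [DecidableEq ι] [Fintype κ]

lemma vnEntropy_eq_sum {τ : Matrix ι ι ℂ} (hτ : τ.IsHermitian) :
    vnEntropy τ = ∑ i, negMulLogb (hτ.eigenvalues i) := by
  rw [vnEntropy, dif_pos hτ, ← Finset.sum_neg_distrib]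
  rfl

lemma roots_X_pow_mul_prod_X_sub_C {R : Type*} [CommRing R] [IsDomain R] (m : ℕ) (d : κ → R) :
    (X ^ m * ∏ k, (X - C (d k))).roots = m • {0} + Finset.univ.val.map d := by
  have hprod : ∏ k, (X - C (d k)) = ((Finset.univ.val.map d).map fun a => X - C a).prod := by
    rw [Multiset.map_map]
    rfl
  have hne : ∏ k, (X - C (d k)) ≠ 0 :=
    (monic_prod_of_monic _ _ fun k _ => monic_X_sub_C (d k)).ne_zero
  rw [roots_mul (mul_ne_zero (pow_ne_zero _ X_ne_zero) hne), roots_pow, roots_X, hprod,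
    roots_multiset_prod_X_sub_C]

/-- The powers of `X` only add zero eigenvalues, which carry no entropy. -/
lemma vnEntropy_eq_sum_of_charpoly {τ : Matrix ι ι ℂ} (hτ : τ.IsHermitian) (d : κ → ℝ)
    (h : X ^ Fintype.card κ * τ.charpoly = X ^ Fintype.card ι * ∏ k, (X - C (d k : ℂ))) :
    vnEntropy τ = ∑ k, negMulLogb (d k) := by
  rw [hτ.charpoly_eq] at h
  have hroots := congrArg (fun p : ℂ[X] => (p.roots.map fun z => negMulLogb z.re).sum) h
  simpa [roots_X_pow_mul_prod_X_sub_C, Multiset.map_nsmul, Multiset.sum_nsmul,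
    vnEntropy_eq_sum hτ] using hroots

lemma vnEntropy_eq_of_charpoly [DecidableEq κ] {τ : Matrix ι ι ℂ} {σ : Matrix κ κ ℂ}
    (hτ : τ.IsHermitian) (hσ : σ.IsHermitian)
    (h : X ^ Fintype.card κ * τ.charpoly = X ^ Fintype.card ι * σ.charpoly) :
    vnEntropy τ = vnEntropy σ := by
  rw [vnEntropy_eq_sum_of_charpoly hτ hσ.eigenvalues (hσ.charpoly_eq ▸ h),
    vnEntropy_eq_sum hσ]

lemma vnEntropy_mul_conjTranspose_comm [DecidableEq κ] (M : Matrix ι κ ℂ) :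
    vnEntropy (M * Mᴴ) = vnEntropy (Mᴴ * M) :=
  vnEntropy_eq_of_charpoly (posSemidef_self_mul_conjTranspose M).1
    (posSemidef_conjTranspose_mul_self M).1 (charpoly_mul_comm' M Mᴴ)

lemma vnEntropy_conjTranspose_mul_mul_of_mem_unitaryGroup {τ U : Matrix ι ι ℂ}
    (hτ : τ.IsHermitian) (hU : U ∈ unitaryGroup ι ℂ) :
    vnEntropy (Uᴴ * τ * U) = vnEntropy τ := by
  refine vnEntropy_eq_of_charpoly (isHermitian_conjTranspose_mul_mul U hτ) hτ ?_
  rw [charpoly_mul_comm, ← Matrix.mul_assoc, ← star_eq_conjTranspose,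
    (mem_unitaryGroup_iff).mp hU, Matrix.one_mul]

lemma charpoly_blockDiagonal {R F : Type*} [CommRing R] [Fintype F] [DecidableEq F]
    (M : F → Matrix ι ι R) :
    (blockDiagonal M).charpoly = ∏ i, (M i).charpoly := by
  have : charmatrix (blockDiagonal M) = blockDiagonal fun i => charmatrix (M i) := by
    refine Matrix.ext fun ⟨a, i⟩ ⟨b, j⟩ => ?_
    by_cases hij : i = j
    · subst hij
      simp [charmatrix_apply, diagonal_apply]
    · simp [blockDiagonal_apply', hij]
  rw [charpoly, this, det_blockDiagonal]
  rfl

lemma vnEntropy_blockDiagonal {F : Type*} [Fintype F] [DecidableEq F] {M : F → Matrix ι ι ℂ}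
    (hM : ∀ i, (M i).IsHermitian) :
    vnEntropy (blockDiagonal M) = ∑ i, vnEntropy (M i) := by
  have hherm : (blockDiagonal M).IsHermitian := by
    rw [IsHermitian, blockDiagonal_conjTranspose]
    exact congrArg _ (funext fun i => (hM i).eq)
  rw [vnEntropy_eq_sum_of_charpoly hherm (fun p : ι × F => (hM p.2).eigenvalues p.1),
    Fintype.sum_prod_type_right]
  · simp only [vnEntropy_eq_sum (hM _)]
  · rw [charpoly_blockDiagonal, Fintype.prod_prod_type_right, Fintype.card_prod, pow_mul]
    simp only [(hM _).charpoly_eq]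
    rfl

lemma vnEntropy_smul {τ : Matrix ι ι ℂ} (hτ : τ.IsHermitian) (r : ℝ) :
    vnEntropy ((r : ℂ) • τ) = r * vnEntropy τ + τ.trace.re * negMulLogb r := by
  set U := hτ.eigenvectorUnitary
  have hdiag : (r : ℂ) • τ
      = (U : Matrix ι ι ℂ) * diagonal (fun i => ((r * hτ.eigenvalues i : ℝ) : ℂ))
        * star (U : Matrix ι ι ℂ) := by
    conv_lhs => rw [hτ.spectral_theorem, Unitary.conjStarAlgAut_apply]
    rw [← Matrix.smul_mul, ← Matrix.mul_smul, ← diagonal_smul]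
    congr
    ext i
    simp
  have hherm : ((r : ℂ) • τ).IsHermitian := hτ.smul (Complex.conj_ofReal r)
  rw [vnEntropy_eq_sum_of_charpoly hherm (fun i => r * hτ.eigenvalues i), vnEntropy_eq_sum hτ,
    hτ.trace_eq_sum_eigenvalues]
  · simp [negMulLogb_mul, Finset.mul_sum, Finset.sum_add_distrib, Finset.sum_mul, add_comm]
  · rw [hdiag, charpoly_mul_comm, ← Matrix.mul_assoc, Unitary.star_mul_self_of_mem U.2,
      Matrix.one_mul, charpoly_diagonal]

lemma vnEntropy_zero : vnEntropy (0 : Matrix ι ι ℂ) = 0 := by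
  simp [vnEntropy_eq_sum isHermitian_zero, isHermitian_zero.eigenvalues_eq_zero_iff.mpr rfl]

end Spectrum

section Concavity

variable {ι : Type*} [Fintype ι] [DecidableEq ι]

lemma sum_normSq_row_of_mem_unitaryGroup {U : Matrix ι ι ℂ} (hU : U ∈ unitaryGroup ι ℂ)
    (j : ι) : ∑ k, Complex.normSq (U j k) = 1 := by
  have h := congrFun (congrFun ((mem_unitaryGroup_iff).mp hU) j) j
  simp only [mul_apply, star_apply, Complex.star_def, Complex.mul_conj, one_apply_eq] at h
  exact_mod_cast h

lemma sum_normSq_col_of_mem_unitaryGroup {U : Matrix ι ι ℂ} (hU : U ∈ unitaryGroup ι ℂ)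
    (k : ι) : ∑ j, Complex.normSq (U j k) = 1 := by
  simpa using sum_normSq_row_of_mem_unitaryGroup (Unitary.star_mem hU) k

lemma mul_diagonal_mul_star_apply_self (U : Matrix ι ι ℂ) (d : ι → ℝ) (j : ι) :
    (U * diagonal (fun k => (d k : ℂ)) * star U) j j
      = ∑ k, ((Complex.normSq (U j k) * d k : ℝ) : ℂ) := by
  simp only [mul_apply, diagonal_apply, mul_ite, mul_zero, Finset.sum_ite_eq', Finset.mem_univ,
    if_true, star_apply, Complex.star_def]
  refine Finset.sum_congr rfl fun k _ => ?_
  rw [mul_right_comm, Complex.mul_conj]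
  push_cast
  ring

/-- Schur concavity: the diagonal is the spectrum mixed by the doubly stochastic matrix
`|U j k|²`, `U` an eigenbasis. -/
lemma vnEntropy_le_sum_negMulLogb_diag {τ : Matrix ι ι ℂ} (hτ : τ.PosSemidef) :
    vnEntropy τ ≤ ∑ j, negMulLogb (τ j j).re := by
  set U : Matrix ι ι ℂ := (hτ.1.eigenvectorUnitary : Matrix ι ι ℂ)
  have hU : U ∈ unitaryGroup ι ℂ := hτ.1.eigenvectorUnitary.2
  set w : ι → ι → ℝ := fun j k => Complex.normSq (U j k)
  set e := hτ.1.eigenvalues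
  have hdiag : ∀ j, (τ j j).re = ∑ k, w j k • e k := fun j => by
    conv_lhs => rw [hτ.1.spectral_theorem, Unitary.conjStarAlgAut_apply]
    exact (congrArg Complex.re (mul_diagonal_mul_star_apply_self U e j)).trans (by simp [w])
  calc vnEntropy τ = ∑ k, (∑ j, w j k) * negMulLogb (e k) := by
        simp [w, e, vnEntropy_eq_sum hτ.1, sum_normSq_col_of_mem_unitaryGroup hU]
    _ = ∑ j, ∑ k, w j k • negMulLogb (e k) := by
        simp only [Finset.sum_mul, smul_eq_mul]
        exact Finset.sum_comm
    _ ≤ ∑ j, negMulLogb (τ j j).re := Finset.sum_le_sum fun j _ => by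
        rw [hdiag j]
        exact concaveOn_negMulLogb.le_map_sum (fun k _ => Complex.normSq_nonneg _)
          (sum_normSq_row_of_mem_unitaryGroup hU j) fun k _ => hτ.eigenvalues_nonneg k

/-- In an eigenbasis of `∑ R k`, bound each `vnEntropy (R k)` by its diagonal, then apply Jensen
across `k` to each diagonal entry. -/
lemma sum_vnEntropy_le_vnEntropy_sum_add {κ : Type*} (s : Finset κ) {R : κ → Matrix ι ι ℂ}
    (hR : ∀ k ∈ s, (R k).PosSemidef) (htr : ∑ k ∈ s, (R k).trace.re = 1) :
    ∑ k ∈ s, vnEntropy (R k)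
      ≤ vnEntropy (∑ k ∈ s, R k) + ∑ k ∈ s, negMulLogb (R k).trace.re := by
  have hσ : (∑ k ∈ s, R k).IsHermitian := (posSemidef_sum s hR).1
  set U : Matrix ι ι ℂ := (hσ.eigenvectorUnitary : Matrix ι ι ℂ)
  have hU : U ∈ unitaryGroup ι ℂ := hσ.eigenvectorUnitary.2
  set y : κ → ι → ℝ := fun k j => ((Uᴴ * R k * U) j j).re
  set t : κ → ℝ := fun k => (R k).trace.re
  have hy0 : ∀ k ∈ s, ∀ j, 0 ≤ y k j := fun k hk j =>
    (Complex.le_def.mp ((hR k hk).conjTranspose_mul_mul_same U).diag_nonneg).1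
  have hyt : ∀ k, ∑ j, y k j = t k := fun k => by
    have h : (Uᴴ * R k * U).trace = (R k).trace := by
      rw [trace_mul_cycle, ← star_eq_conjTranspose, (mem_unitaryGroup_iff).mp hU, Matrix.one_mul]
    simpa [trace, y, t] using congrArg Complex.re h
  have hyσ : ∀ j, ∑ k ∈ s, y k j = hσ.eigenvalues j := fun j => by
    have h := congrFun (congrFun hσ.conjStarAlgAut_star_eigenvectorUnitary j) j
    rw [Unitary.conjStarAlgAut_star_apply, Finset.mul_sum, Finset.sum_mul, Matrix.sum_apply,
      diagonal_apply_eq, star_eq_conjTranspose] at h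
    simp [y, U, ← Complex.re_sum, h]
  have hSchur : ∀ k ∈ s, vnEntropy (R k) ≤ ∑ j, negMulLogb (y k j) := fun k hk => by
    rw [← vnEntropy_conjTranspose_mul_mul_of_mem_unitaryGroup (hR k hk).1 hU]
    exact vnEntropy_le_sum_negMulLogb_diag ((hR k hk).conjTranspose_mul_mul_same U)
  calc ∑ k ∈ s, vnEntropy (R k)
        ≤ ∑ k ∈ s, ∑ j, negMulLogb (y k j) := Finset.sum_le_sum hSchur
    _ = ∑ j, ∑ k ∈ s, (negMulLogb (y k j) + y k j * Real.logb 2 (t k))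
          + ∑ k ∈ s, negMulLogb (t k) := by
        have hcross :
            ∑ j, ∑ k ∈ s, y k j * Real.logb 2 (t k) = -∑ k ∈ s, negMulLogb (t k) := by
          rw [Finset.sum_comm]
          simp [← Finset.sum_mul, hyt, negMulLogb]
        rw [Finset.sum_comm]
        simp only [Finset.sum_add_distrib, hcross]
        ring
    _ ≤ ∑ j, negMulLogb (hσ.eigenvalues j) + ∑ k ∈ s, negMulLogb (t k) := by
        gcongr with j
        rw [← hyσ j]
        exact sum_negMulLogb_add_mul_logb_le s (fun k hk => hy0 k hk j)
          (fun k hk => hyt k ▸ Finset.single_le_sum (fun j _ => hy0 k hk j) (Finset.mem_univ j))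
          htr
    _ = vnEntropy (∑ k ∈ s, R k) + ∑ k ∈ s, negMulLogb (R k).trace.re := by
        rw [vnEntropy_eq_sum hσ]

end Concavity

section Pinching

variable {ι B F : Type*} [DecidableEq F]

def pinching (f : ι → F) (ρ : Matrix ι ι ℂ) : Matrix ι ι ℂ :=
  of fun a a' => if f a = f a' then ρ a a' else 0

def restrictRows (f : ι → F) (i : F) (M : Matrix ι B ℂ) : Matrix ι B ℂ :=
  of fun a b => if f a = i then M a b else 0

def flagRows (f : ι → F) (M : Matrix ι B ℂ) : Matrix ι (B × F) ℂ :=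
  of fun a p => restrictRows f p.2 M a p.1

lemma flagRows_mul_conjTranspose [Fintype B] [Fintype F] (f : ι → F) (M : Matrix ι B ℂ) :
    flagRows f M * (flagRows f M)ᴴ = pinching f (M * Mᴴ) := by
  ext a a'
  simp only [flagRows, restrictRows, pinching, mul_apply, of_apply, conjTranspose_apply,
    Fintype.sum_prod_type_right]
  split_ifs with h <;> simp [apply_ite star, ite_mul, mul_ite, h]

lemma conjTranspose_flagRows_mul [Fintype ι] (f : ι → F) (M : Matrix ι B ℂ) :
    (flagRows f M)ᴴ * flagRows f M
      = blockDiagonal fun i => (restrictRows f i M)ᴴ * restrictRows f i M := by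
  ext ⟨b, i⟩ ⟨b', i'⟩
  simp only [flagRows, restrictRows, blockDiagonal_apply', mul_apply, of_apply,
    conjTranspose_apply]
  split_ifs with h
  · simp [h]
  · exact Finset.sum_eq_zero fun a _ => by split_ifs <;> simp_all

lemma sum_conjTranspose_restrictRows_mul [Fintype ι] [Fintype F] (f : ι → F)
    (M : Matrix ι B ℂ) :
    ∑ i, (restrictRows f i M)ᴴ * restrictRows f i M = Mᴴ * M := by
  ext b b'
  simp only [restrictRows, Matrix.sum_apply, mul_apply, of_apply, conjTranspose_apply]
  rw [Finset.sum_comm]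
  simp [apply_ite star, ite_mul, mul_ite]

lemma vnEntropy_pinching_le [Fintype ι] [DecidableEq ι] [Fintype B] [DecidableEq B] [Fintype F]
    [Nonempty F] (f : ι → F) {M : Matrix ι B ℂ} (hM : (M * Mᴴ).trace = 1) :
    vnEntropy (pinching f (M * Mᴴ)) ≤ vnEntropy (M * Mᴴ) + Real.logb 2 (Fintype.card F) := by
  set P : F → Matrix B B ℂ := fun i => (restrictRows f i M)ᴴ * restrictRows f i M
  have hP : ∀ i, (P i).PosSemidef := fun i => posSemidef_conjTranspose_mul_self _
  have hsum : ∑ i, (P i).trace.re = 1 := by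
    rw [← Complex.re_sum, ← trace_sum, sum_conjTranspose_restrictRows_mul, trace_mul_comm, hM,
      Complex.one_re]
  calc vnEntropy (pinching f (M * Mᴴ)) = ∑ i, vnEntropy (P i) := by
        rw [← flagRows_mul_conjTranspose, vnEntropy_mul_conjTranspose_comm,
          conjTranspose_flagRows_mul, vnEntropy_blockDiagonal fun i => (hP i).1]
    _ ≤ vnEntropy (∑ i, P i) + ∑ i, negMulLogb (P i).trace.re :=
        sum_vnEntropy_le_vnEntropy_sum_add _ (fun i _ => hP i) hsum
    _ ≤ vnEntropy (M * Mᴴ) + Real.logb 2 (Fintype.card F) := by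
        rw [sum_conjTranspose_restrictRows_mul, ← vnEntropy_mul_conjTranspose_comm]
        gcongr
        exact sum_negMulLogb_le_logb_card (fun i => (Complex.le_def.mp (hP i).trace_nonneg).1) hsum

end Pinching

lemma nrmSq_nonneg {ι : Type*} [Fintype ι] (χ : ι → ℂ) : 0 ≤ nrmSq χ :=
  Finset.sum_nonneg fun _ _ => Complex.normSq_nonneg _

section Bipartite

variable {A B : Type*} {nA : A → ℕ} {nB : B → ℕ} {N : ℕ} {ψ : A × B → ℂ}

lemma sum_projN_mul_star_projN (hsupp : ∀ p : A × B, N < nA p.1 + nB p.2 → ψ p = 0)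
    (a a' : A) (b : B) :
    ∑ n ∈ Finset.range (N + 1), projN nA nB n ψ (a, b) * star (projN nA nB n ψ (a', b))
      = if min (nA a) N = min (nA a') N then ψ (a, b) * star (ψ (a', b)) else 0 := by
  by_cases h0 : ψ (a, b) = 0 ∨ ψ (a', b) = 0
  · rcases h0 with h0 | h0 <;> simp [projN, h0]
  obtain ⟨h1, h2⟩ := not_or.mp h0
  have ha : nA a + nB b ≤ N := not_lt.mp (mt (hsupp (a, b)) h1)
  have ha' : nA a' + nB b ≤ N := not_lt.mp (mt (hsupp (a', b)) h2)
  simp only [projN, apply_ite star, star_zero, ite_mul, mul_ite, zero_mul, mul_zero,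
    Finset.sum_ite_eq, Finset.mem_range]
  split_ifs <;> first | rfl | omega

variable [Fintype A] [Fintype B]

lemma redA_eq_mul_conjTranspose (χ : A × B → ℂ) :
    redA χ = of (Function.curry χ) * (of (Function.curry χ))ᴴ := by
  ext a a'
  simp [redA, mul_apply]

lemma posSemidef_redA (χ : A × B → ℂ) : (redA χ).PosSemidef := by
  rw [redA_eq_mul_conjTranspose]
  exact posSemidef_self_mul_conjTranspose _

lemma trace_redA (χ : A × B → ℂ) : (redA χ).trace = nrmSq χ := by
  simp [redA, trace, nrmSq, Fintype.sum_prod_type, Complex.mul_conj]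

lemma redA_smul (r : ℝ) (χ : A × B → ℂ) :
    redA ((r : ℂ) • χ) = ((r ^ 2 : ℝ) : ℂ) • redA χ := by
  ext a a'
  simp only [redA, Matrix.smul_apply, of_apply, Pi.smul_apply, smul_eq_mul, star_mul',
    Complex.star_def, Complex.conj_ofReal, Finset.mul_sum]
  exact Finset.sum_congr rfl fun b _ => by push_cast; ring

lemma nrmSq_mul_entE_normalize [DecidableEq A] (χ : A × B → ℂ) :
    nrmSq χ * entE ((((Real.sqrt (nrmSq χ))⁻¹ : ℝ) : ℂ) • χ)
      = entE χ - negMulLogb (nrmSq χ) := by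
  have hρ := posSemidef_redA χ
  have htr : (redA χ).trace.re = nrmSq χ := by rw [trace_redA, Complex.ofReal_re]
  rcases (nrmSq_nonneg χ).eq_or_lt with hp | hp
  · have hzero : redA χ = 0 :=
      hρ.trace_eq_zero_iff.mp (by rw [trace_redA, ← hp, Complex.ofReal_zero])
    rw [← hp]
    simp [entE, hzero, vnEntropy_zero]
  · have hinv : negMulLogb (nrmSq χ)⁻¹ = (nrmSq χ)⁻¹ * Real.logb 2 (nrmSq χ) := by
      rw [negMulLogb, Real.logb_inv]
      ring
    rw [entE, redA_smul, vnEntropy_smul hρ.1, inv_pow, Real.sq_sqrt hp.le, htr, hinv, entE,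
      negMulLogb]
    field_simp
    ring

lemma sum_nrmSq_projN (hsupp : ∀ p : A × B, N < nA p.1 + nB p.2 → ψ p = 0) :
    ∑ n ∈ Finset.range (N + 1), nrmSq (projN nA nB n ψ) = nrmSq ψ := by
  unfold nrmSq
  rw [Finset.sum_comm]
  refine Finset.sum_congr rfl fun p _ => ?_
  simp only [projN, apply_ite Complex.normSq, map_zero, Finset.sum_ite_eq, Finset.mem_range]
  split_ifs with h
  · rfl
  · simp [hsupp p (by omega)]

/-- Rows of `ψ` with more than `N` particles on `A` vanish, so truncating the label at `N`
changes nothing. -/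
lemma sum_redA_projN (hsupp : ∀ p : A × B, N < nA p.1 + nB p.2 → ψ p = 0) :
    ∑ n ∈ Finset.range (N + 1), redA (projN nA nB n ψ)
      = pinching (fun a => (⟨min (nA a) N, by omega⟩ : Fin (N + 1))) (redA ψ) := by
  ext a a'
  simp only [Matrix.sum_apply, redA, pinching, of_apply, Fin.mk.injEq]
  rw [Finset.sum_comm]
  simp only [sum_projN_mul_star_projN hsupp]
  split_ifs <;> simp

end Bipartite

/-- Measuring the total particle number of a bipartite pure state with at most
`N` particles increases the average entanglement by at most `log₂(N+1)`:
`∑ₙ ⟨ψ|Pₙ|ψ⟩ E(Pₙψ/‖Pₙψ‖) ≤ E(ψ) + log₂(N+1)`. -/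
theorem avg_entanglement_after_number_measurement
    {A B : Type*} [Fintype A] [Fintype B] [DecidableEq A]
    (nA : A → ℕ) (nB : B → ℕ) (N : ℕ)
    (ψ : A × B → ℂ) (hψ : nrmSq ψ = 1)
    (hsupp : ∀ p : A × B, N < nA p.1 + nB p.2 → ψ p = 0) :
    ∑ n ∈ Finset.range (N + 1),
        nrmSq (projN nA nB n ψ) *
          entE ((((Real.sqrt (nrmSq (projN nA nB n ψ)))⁻¹ : ℝ) : ℂ) •
            projN nA nB n ψ)
      ≤ entE ψ + Real.logb 2 (N + 1) := by
  classical
  have hmix := sum_vnEntropy_le_vnEntropy_sum_add (Finset.range (N + 1))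
    (fun n _ => posSemidef_redA (projN nA nB n ψ))
    (by simpa [trace_redA] using (sum_nrmSq_projN hsupp).trans hψ)
  have hpinch := vnEntropy_pinching_le (fun a => (⟨min (nA a) N, by omega⟩ : Fin (N + 1)))
    (M := of (Function.curry ψ)) (by rw [← redA_eq_mul_conjTranspose, trace_redA, hψ]; simp)
  simp only [trace_redA, Complex.ofReal_re] at hmix
  calc _ = ∑ n ∈ Finset.range (N + 1),
          (entE (projN nA nB n ψ) - negMulLogb (nrmSq (projN nA nB n ψ))) :=
        Finset.sum_congr rfl fun n _ => nrmSq_mul_entE_normalize _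
    _ ≤ vnEntropy (∑ n ∈ Finset.range (N + 1), redA (projN nA nB n ψ)) := by
        rw [Finset.sum_sub_distrib]
        exact sub_le_iff_le_add.mpr hmix
    _ ≤ entE ψ + Real.logb 2 (N + 1) := by
        rw [sum_redA_projN hsupp, entE, redA_eq_mul_conjTranspose]
        convert hpinch using 3
        simp
end

section
/- Let ρ = [[w₀₀,0,0,0],[0,w₀₁,γ,0],[0,γ,w₁₀,0],[0,0,0,w₁₁]] be a two-qubit density matrix with γ ≥ 0, and set p = w₀₁ + w₁₀ > 0 and C̄ = 2γ/p. Then p·C̄ − (1−p) ≤ max(0, 2γ − 2√(w₀₀ w₁₁)) ≤ p·C̄. -/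
/-- Relation between the concurrence `C = max(0, 2γ − 2√(w₀₀w₁₁))` of a
superselection-compatible two-qubit state and the SSR-concurrence
`C̄ = 2γ/p` of its one-particle block of weight `p = w₀₁ + w₁₀`:
`p·C̄ − (1−p) ≤ C ≤ p·C̄`. -/
theorem concurrence_bounds (w00 w01 w10 w11 γ : ℝ)
    (h00 : 0 ≤ w00) (h01 : 0 ≤ w01) (h10 : 0 ≤ w10) (h11 : 0 ≤ w11)
    (hγ : 0 ≤ γ) (hγ2 : γ ^ 2 ≤ w01 * w10)
    (htr : w00 + w01 + w10 + w11 = 1)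
    (p : ℝ) (hp : p = w01 + w10) (hppos : 0 < p)
    (Cbar : ℝ) (hC : Cbar = 2 * γ / p) :
    p * Cbar - (1 - p) ≤ max 0 (2 * γ - 2 * Real.sqrt (w00 * w11)) ∧
    max 0 (2 * γ - 2 * Real.sqrt (w00 * w11)) ≤ p * Cbar := by
  have hpC : p * Cbar = 2 * γ := by
    rw [hC]; field_simp
  have hsq : 0 ≤ Real.sqrt (w00 * w11) := Real.sqrt_nonneg _
  have hAM : 2 * Real.sqrt (w00 * w11) ≤ w00 + w11 := by
    nlinarith [Real.sq_sqrt (mul_nonneg h00 h11), Real.sqrt_nonneg (w00*w11),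
      sq_nonneg (Real.sqrt (w00*w11) - w00), sq_nonneg (w00 - w11)]
  constructor
  · have h1 : 1 - p = w00 + w11 := by rw [hp]; linarith
    calc p * Cbar - (1 - p) = 2*γ - (w00 + w11) := by rw [hpC, h1]
    _ ≤ 2*γ - 2 * Real.sqrt (w00 * w11) := by linarith
    _ ≤ max 0 (2 * γ - 2 * Real.sqrt (w00 * w11)) := le_max_right _ _
  · rw [hpC]
    exact max_le (by linarith) (by linarith)
end

section
/- Let ρ₁ = (1/p)·[[w₀₁, γ],[γ, w₁₀]] be a density matrix on the span of {|01⟩,|10⟩} with γ ≥ 0 and p = w₀₁+w₁₀ = tr normalization, and C̄ = 2γ/p. Let s ∈ [0,1] satisfy C̄/2 = √(s(1−s)). Then there exists a decomposition ρ₁ = ∑_i q_i |χ_i⟩⟨χ_i| in which every |χ_i⟩ has Schmidt coefficients (s, 1−s). -/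
open Matrix

lemma exists_weights (s a : ℝ) (hs0 : 0 ≤ s) (hs1 : s ≤ 1)
    (hkey : s * (1 - s) ≤ a * (1 - a)) :
    ∃ q0 q1 : ℝ, 0 ≤ q0 ∧ 0 ≤ q1 ∧ q0 + q1 = 1 ∧ q0 * s + q1 * (1 - s) = a := by
  rcases lt_trichotomy s (1/2) with h | h | h
  · have ha1 : s ≤ a := by nlinarith
    have ha2 : a ≤ 1 - s := by nlinarith
    have hd : (0:ℝ) < 1 - 2*s := by linarith
    have hne : (1:ℝ) - 2*s ≠ 0 := ne_of_gt hd
    refine ⟨(1 - s - a)/(1 - 2*s), (a - s)/(1 - 2*s), ?_, ?_, ?_, ?_⟩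
    · exact div_nonneg (by linarith) hd.le
    · exact div_nonneg (by linarith) hd.le
    · rw [← add_div, div_eq_one_iff_eq hne]; ring
    · rw [div_mul_eq_mul_div, div_mul_eq_mul_div, ← add_div, div_eq_iff hne]
      ring
  · have ha : a = 1/2 := by nlinarith
    exact ⟨1/2, 1/2, by norm_num, by norm_num, by norm_num, by rw [ha, h]; ring⟩
  · have ha1 : 1 - s ≤ a := by nlinarith
    have ha2 : a ≤ s := by nlinarith
    have hd : 1 - 2*s < 0 := by linarith
    have hne : (1:ℝ) - 2*s ≠ 0 := ne_of_lt hd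
    refine ⟨(1 - s - a)/(1 - 2*s), (a - s)/(1 - 2*s), ?_, ?_, ?_, ?_⟩
    · exact div_nonneg_iff.mpr (Or.inr ⟨by linarith, hd.le⟩)
    · exact div_nonneg_iff.mpr (Or.inr ⟨by linarith, hd.le⟩)
    · rw [← add_div, div_eq_one_iff_eq hne]; ring
    · rw [div_mul_eq_mul_div, div_mul_eq_mul_div, ← add_div, div_eq_iff hne]
      ring

/-- The one-particle block `ρ₁ = (1/p)[[w₀₁,γ],[γ,w₁₀]]` (a density matrix on
span{|01⟩,|10⟩}) admits a pure-state decomposition `ρ₁ = ∑ qᵢ |χᵢ⟩⟨χᵢ|` in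
which every `|χᵢ⟩` has Schmidt coefficients `(s, 1−s)`, where
`√(s(1−s)) = C̄/2 = γ/p`. -/
theorem optimal_decomposition_one_particle_block
    (w01 w10 γ : ℝ) (hγ : 0 ≤ γ) (h01 : 0 ≤ w01) (h10 : 0 ≤ w10)
    (hγ2 : γ ^ 2 ≤ w01 * w10)
    (p : ℝ) (hp : p = w01 + w10) (hppos : 0 < p)
    (s : ℝ) (hs0 : 0 ≤ s) (hs1 : s ≤ 1)
    (hs : Real.sqrt (s * (1 - s)) = (2 * γ / p) / 2) :
    ∃ (n : ℕ) (q : Fin n → ℝ) (χ : Fin n → Fin 2 → ℂ),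
      (∀ i, 0 ≤ q i) ∧ (∑ i, q i = 1) ∧
      (∀ i, (‖χ i 0‖ ^ 2 = s ∧ ‖χ i 1‖ ^ 2 = 1 - s) ∨
            (‖χ i 0‖ ^ 2 = 1 - s ∧ ‖χ i 1‖ ^ 2 = s)) ∧
      ((p⁻¹ : ℂ) • !![(w01 : ℂ), (γ : ℂ); (γ : ℂ), (w10 : ℂ)] =
        ∑ i, (q i : ℂ) • Matrix.of fun a b => χ i a * star (χ i b)) := by
  have hs' : Real.sqrt (s * (1 - s)) = γ / p := by rw [hs]; ring
  have hss : s * (1 - s) = (γ/p)^2 := by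
    rw [← hs', Real.sq_sqrt (by nlinarith)]
  have hkey : s * (1 - s) ≤ (w01/p) * (1 - w01/p) := by
    have h1a : 1 - w01/p = w10 / p := by field_simp; linarith [hp]
    rw [hss, h1a, div_mul_div_comm, div_pow, ← pow_two]
    gcongr
  obtain ⟨q0, q1, hq0, hq1, hqsum, hqa⟩ := exists_weights s (w01/p) hs0 hs1 hkey
  have hb : q0 * (1 - s) + q1 * s = w10 / p := by
    have h1a : 1 - w01/p = w10 / p := by field_simp; linarith [hp]
    rw [← h1a]; linarith
  set rs := Real.sqrt s with hrs
  set rt := Real.sqrt (1 - s) with hrt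
  have hrs2 : rs * rs = s := Real.mul_self_sqrt hs0
  have hrt2 : rt * rt = 1 - s := Real.mul_self_sqrt (by linarith)
  have hrst : rs * rt = γ / p := by rw [hrs, hrt, ← Real.sqrt_mul hs0, hs']
  have hpne : p ≠ 0 := ne_of_gt hppos
  refine ⟨2, ![q0, q1], ![![(rs:ℂ), (rt:ℂ)], ![(rt:ℂ), (rs:ℂ)]], ?_, ?_, ?_, ?_⟩
  · intro i; fin_cases i <;> simpa
  · simp [Fin.sum_univ_two]; linarith
  · have e1 : ‖(rs:ℂ)‖ ^ 2 = s := by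
      rw [Complex.norm_real, Real.norm_eq_abs, abs_of_nonneg (Real.sqrt_nonneg _), sq, hrs2]
    have e2 : ‖(rt:ℂ)‖ ^ 2 = 1 - s := by
      rw [Complex.norm_real, Real.norm_eq_abs, abs_of_nonneg (Real.sqrt_nonneg _), sq, hrt2]
    intro i; fin_cases i
    · left; exact ⟨e1, e2⟩
    · right; exact ⟨e2, e1⟩
  · ext i j
    fin_cases i <;> fin_cases j <;>
      simp [Fin.sum_univ_two, Matrix.smul_apply, Complex.star_def,
        Complex.conj_ofReal, ← Complex.ofReal_mul, ← Complex.ofReal_inv,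
        ← Complex.ofReal_add] <;>
      push_cast <;>
      norm_cast
    · linear_combination -hqa - q0*hrs2 - q1*hrt2
    · linear_combination (-q0-q1)*hrst - (γ/p)*hqsum
    · linear_combination (-q0-q1)*hrst - (γ/p)*hqsum
    · linear_combination -hb - q0*hrt2 - q1*hrs2
end

section
/- Let ρ = ⊕_i p_i |φ_i⟩⟨φ_i| be a density matrix that is a direct sum of pure states on mutually orthogonal subspaces (with ∑ p_i = 1), and suppose N_A is a self-adjoint operator such that each |φ_i⟩ lies in an eigenspace-compatible subspace with ⟨φ_i|φ_j⟩ = δ_ij and ⟨φ_i|N_A|φ_j⟩ = 0 for i ≠ j. Then for any decomposition ρ = ∑_j |ζ_j⟩⟨ζ_j| with |ζ_j⟩ = ∑_i u_{ji}√p_i |φ_i⟩ where (u_{ji}) is an isometry (∑_j u_{ji}* u_{ji'} = δ_{ii'}), one has ∑_j ⟨ζ_j|N_A|ζ_j⟩²/⟨ζ_j|ζ_j⟩ ≤ ∑_i p_i ⟨φ_i|N_A|φ_i⟩². Consequently the average variance ∑_j ⟨ζ_j|ζ_j⟩ · V(ζ_j/‖ζ_j‖) is minimized by the direct-sum decomposition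 itself. -/
open Matrix


lemma vf_sum_comm3 {α β γ : Type*} [Fintype α] [Fintype β] [Fintype γ]
    (f : α → β → γ → ℂ) : ∑ x, ∑ y, ∑ i, f x y i = ∑ i, ∑ x, ∑ y, f x y i := by
  rw [show (∑ x, ∑ y, ∑ i, f x y i) = ∑ x, ∑ i, ∑ y, f x y i from
    Finset.sum_congr rfl fun x _ => Finset.sum_comm]
  exact Finset.sum_comm

lemma vf_expand_dot {d m : ℕ} (M : Matrix (Fin d) (Fin d) ℂ) (φ : Fin m → Fin d → ℂ)
    (c : Fin m → ℂ) :
    star (∑ i, c i • φ i) ⬝ᵥ (M *ᵥ ∑ i, c i • φ i)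
      = ∑ i, ∑ i', star (c i) * c i' * (star (φ i) ⬝ᵥ (M *ᵥ φ i')) := by
  have hL : ∀ (w : Fin d → ℂ), star (∑ i, c i • φ i) ⬝ᵥ w
      = ∑ i, star (c i) * (star (φ i) ⬝ᵥ w) := by
    intro w
    simp only [dotProduct, star_sum, Finset.sum_apply, Pi.star_apply, Pi.smul_apply,
      smul_eq_mul, star_mul', Finset.sum_mul, Finset.mul_sum]
    rw [Finset.sum_comm]
    exact Finset.sum_congr rfl fun i _ => Finset.sum_congr rfl fun x _ => by ring
  have hR : ∀ (v : Fin d → ℂ), star v ⬝ᵥ (M *ᵥ ∑ i, c i • φ i)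
      = ∑ i, c i * (star v ⬝ᵥ (M *ᵥ φ i)) := by
    intro v
    simp only [dotProduct, mulVec, Finset.sum_apply, Pi.smul_apply, smul_eq_mul,
      Finset.mul_sum, Finset.sum_mul]
    rw [vf_sum_comm3]
    exact Finset.sum_congr rfl fun i _ => Finset.sum_congr rfl fun x _ =>
      Finset.sum_congr rfl fun y _ => by ring
  rw [hL]
  exact Finset.sum_congr rfl fun i _ => by
    rw [hR, Finset.mul_sum]; exact Finset.sum_congr rfl fun i' _ => by ring

lemma vf_expand_dot0 {d m : ℕ} (φ : Fin m → Fin d → ℂ) (c : Fin m → ℂ) :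
    star (∑ i, c i • φ i) ⬝ᵥ (∑ i, c i • φ i)
      = ∑ i, ∑ i', star (c i) * c i' * (star (φ i) ⬝ᵥ φ i') := by
  have h := vf_expand_dot (1 : Matrix (Fin d) (Fin d) ℂ) φ c
  simpa [Matrix.one_mulVec] using h

lemma vf_herm_real {d : ℕ} (A : Matrix (Fin d) (Fin d) ℂ) (hA : A.IsHermitian)
    (v : Fin d → ℂ) : star v ⬝ᵥ (A *ᵥ v) = ((star v ⬝ᵥ (A *ᵥ v)).re : ℂ) := by
  have h : star (star v ⬝ᵥ (A *ᵥ v)) = star v ⬝ᵥ (A *ᵥ v) := by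
    rw [← Matrix.star_dotProduct, Matrix.star_mulVec, Matrix.dotProduct_mulVec, hA.eq]
  exact (Complex.conj_eq_iff_re.mp h).symm

/-- Key inequality for the additivity of the variance of formation: if the
`φ i` are orthonormal with `⟨φ i|N_A|φ j⟩ = 0` for `i ≠ j`, then for any
decomposition `ζ j = ∑ i u j i √(p i) φ i` with `(u j i)` an isometry,
`∑_j ⟨ζ_j|N_A|ζ_j⟩²/⟨ζ_j|ζ_j⟩ ≤ ∑_i p_i ⟨φ_i|N_A|φ_i⟩²`, and consequently
the average variance of the `ζ` decomposition is at least that of the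
block decomposition. -/
theorem vf_additivity_key_inequality {d m k : ℕ}
    (NA : Matrix (Fin d) (Fin d) ℂ) (hNA : NA.IsHermitian)
    (φ : Fin m → Fin d → ℂ)
    (hortho : ∀ i j, star (φ i) ⬝ᵥ φ j = if i = j then 1 else 0)
    (hNAoff : ∀ i j, i ≠ j → star (φ i) ⬝ᵥ (NA *ᵥ φ j) = 0)
    (p : Fin m → ℝ) (hp : ∀ i, 0 ≤ p i) (hps : ∑ i, p i = 1)
    (u : Fin k → Fin m → ℂ)
    (hiso : ∀ i i', ∑ j, star (u j i) * u j i' = if i = i' then 1 else 0)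
    (ζ : Fin k → Fin d → ℂ)
    (hζ : ∀ j, ζ j = ∑ i, (u j i * (Real.sqrt (p i) : ℂ)) • φ i) :
    (∑ j, (if (star (ζ j) ⬝ᵥ ζ j).re = 0 then 0 else
        ((star (ζ j) ⬝ᵥ (NA *ᵥ ζ j)).re) ^ 2 / (star (ζ j) ⬝ᵥ ζ j).re)
      ≤ ∑ i, p i * ((star (φ i) ⬝ᵥ (NA *ᵥ φ i)).re) ^ 2) ∧
    (∑ i, p i * (4 * ((star (φ i) ⬝ᵥ ((NA * NA) *ᵥ φ i)).re -
          ((star (φ i) ⬝ᵥ (NA *ᵥ φ i)).re) ^ 2))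
      ≤ ∑ j, ((star (ζ j) ⬝ᵥ ((NA * NA) *ᵥ ζ j)).re -
          (if (star (ζ j) ⬝ᵥ ζ j).re = 0 then 0 else
            ((star (ζ j) ⬝ᵥ (NA *ᵥ ζ j)).re) ^ 2 / (star (ζ j) ⬝ᵥ ζ j).re))
        * 4) := by

  classical
  set E : Fin m → ℝ := fun i => (star (φ i) ⬝ᵥ (NA *ᵥ φ i)).re with hE
  set T : Fin m → ℝ := fun i => (star (φ i) ⬝ᵥ ((NA * NA) *ᵥ φ i)).re with hT
  set w : Fin k → Fin m → ℝ := fun j i => Complex.normSq (u j i) * p i with hwdef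
  have hw0 : ∀ j i, 0 ≤ w j i := fun j i => mul_nonneg (Complex.normSq_nonneg _) (hp i)
  -- diagonal coefficient computation
  have hcc : ∀ j i, star (u j i * (Real.sqrt (p i) : ℂ)) * (u j i * (Real.sqrt (p i) : ℂ))
      = (w j i : ℂ) := by
    intro j i
    rw [star_mul', Complex.star_def, Complex.conj_ofReal, hwdef]
    push_cast
    rw [mul_mul_mul_comm, ← Complex.normSq_eq_conj_mul_self,
      ← Complex.ofReal_mul, Real.mul_self_sqrt (hp i)]
  -- ⟨ζ_j|ζ_j⟩
  have hdot : ∀ j, star (ζ j) ⬝ᵥ ζ j = ((∑ i, w j i : ℝ) : ℂ) := by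
    intro j
    rw [hζ j, vf_expand_dot0]
    simp_rw [hortho]
    simp only [mul_ite, mul_one, mul_zero, Finset.sum_ite_eq, Finset.mem_univ, if_true]
    simp_rw [hcc]
    norm_cast
  -- ⟨ζ_j|NA|ζ_j⟩
  have hNAdot : ∀ j, star (ζ j) ⬝ᵥ (NA *ᵥ ζ j) = ((∑ i, w j i * E i : ℝ) : ℂ) := by
    intro j
    rw [hζ j, vf_expand_dot]
    push_cast
    refine Finset.sum_congr rfl fun i _ => ?_
    rw [Finset.sum_eq_single i]
    · rw [vf_herm_real NA hNA (φ i), hcc]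
    · intro b _ hb
      rw [hNAoff i b (Ne.symm hb), mul_zero]
    · intro h; exact absurd (Finset.mem_univ i) h
  -- ∑_j ⟨ζ_j|NA²|ζ_j⟩ = ∑_i p_i ⟨φ_i|NA²|φ_i⟩
  have hsumuu : ∀ i i', ∑ j, star (u j i * (Real.sqrt (p i) : ℂ)) *
        (u j i' * (Real.sqrt (p i') : ℂ)) * (star (φ i) ⬝ᵥ ((NA * NA) *ᵥ φ i'))
      = (∑ j, star (u j i) * u j i') * ((Real.sqrt (p i) : ℂ) * (Real.sqrt (p i') : ℂ)
          * (star (φ i) ⬝ᵥ ((NA * NA) *ᵥ φ i'))) := by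
    intro i i'
    rw [Finset.sum_mul]
    refine Finset.sum_congr rfl fun j _ => ?_
    rw [star_mul', Complex.star_def, Complex.conj_ofReal]
    ring
  have hNA2 : ∑ j, star (ζ j) ⬝ᵥ ((NA * NA) *ᵥ ζ j)
      = ∑ i, (p i : ℂ) * (star (φ i) ⬝ᵥ ((NA * NA) *ᵥ φ i)) := by
    have e : ∀ j, star (ζ j) ⬝ᵥ ((NA * NA) *ᵥ ζ j)
        = ∑ i, ∑ i', star (u j i * (Real.sqrt (p i) : ℂ)) *
            (u j i' * (Real.sqrt (p i') : ℂ)) *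
            (star (φ i) ⬝ᵥ ((NA * NA) *ᵥ φ i')) := fun j => by
      rw [hζ j, vf_expand_dot]
    simp_rw [e]
    rw [Finset.sum_comm]
    refine Finset.sum_congr rfl fun i _ => ?_
    rw [Finset.sum_comm]
    simp_rw [hsumuu, hiso]
    simp only [ite_mul, one_mul, zero_mul, Finset.sum_ite_eq, Finset.mem_univ, if_true]
    rw [← Complex.ofReal_mul, Real.mul_self_sqrt (hp i)]
  -- real parts
  have hre1 : ∀ j, (star (ζ j) ⬝ᵥ ζ j).re = ∑ i, w j i := fun j => by
    rw [hdot j, Complex.ofReal_re]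
  have hre2 : ∀ j, (star (ζ j) ⬝ᵥ (NA *ᵥ ζ j)).re = ∑ i, w j i * E i := fun j => by
    rw [hNAdot j, Complex.ofReal_re]
  have hNA2re : ∑ j, (star (ζ j) ⬝ᵥ ((NA * NA) *ᵥ ζ j)).re = ∑ i, p i * T i := by
    have h := congrArg Complex.re hNA2
    rw [Complex.re_sum, Complex.re_sum] at h
    rw [h]
    exact Finset.sum_congr rfl fun i _ => by
      rw [Complex.mul_re, Complex.ofReal_re, Complex.ofReal_im, zero_mul, sub_zero]
  -- column sums of w
  have hsumw : ∀ i, ∑ j, w j i = p i := by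
    intro i
    have h := hiso i i
    rw [if_pos rfl] at h
    have h2 : ∑ j, (Complex.normSq (u j i) : ℂ) = 1 := by
      rw [← h]
      exact Finset.sum_congr rfl fun j _ => by
        rw [Complex.star_def, ← Complex.normSq_eq_conj_mul_self]
    have h3 : ∑ j, Complex.normSq (u j i) = 1 := by
      have := congrArg Complex.re h2
      rw [Complex.re_sum] at this
      simpa using this
    rw [hwdef]
    simp only
    rw [← Finset.sum_mul, h3, one_mul]
  -- the key Cauchy–Schwarz step
  have key : ∀ j, (if (∑ i, w j i) = 0 then 0 else
      (∑ i, w j i * E i) ^ 2 / (∑ i, w j i)) ≤ ∑ i, w j i * E i ^ 2 := by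
    intro j
    by_cases hq : (∑ i, w j i) = 0
    · rw [if_pos hq]
      exact Finset.sum_nonneg fun i _ => mul_nonneg (hw0 j i) (sq_nonneg _)
    · rw [if_neg hq]
      have hqpos : 0 < ∑ i, w j i :=
        lt_of_le_of_ne (Finset.sum_nonneg fun i _ => hw0 j i) (Ne.symm hq)
      rw [div_le_iff₀ hqpos]
      have hcs := Finset.sum_sq_le_sum_mul_sum_of_sq_eq_mul Finset.univ
        (r := fun i => w j i * E i) (f := fun i => w j i) (g := fun i => w j i * E i ^ 2)
        (fun i _ => hw0 j i) (fun i _ => mul_nonneg (hw0 j i) (sq_nonneg _))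
        (fun i _ => by ring)
      exact hcs.trans_eq (mul_comm _ _)
  have hsum1 : ∑ j, ∑ i, w j i * E i ^ 2 = ∑ i, p i * E i ^ 2 := by
    rw [Finset.sum_comm]
    exact Finset.sum_congr rfl fun i _ => by rw [← Finset.sum_mul, hsumw i]
  have main1 : ∑ j, (if (star (ζ j) ⬝ᵥ ζ j).re = 0 then 0 else
        ((star (ζ j) ⬝ᵥ (NA *ᵥ ζ j)).re) ^ 2 / (star (ζ j) ⬝ᵥ ζ j).re)
      ≤ ∑ i, p i * E i ^ 2 := by
    calc ∑ j, (if (star (ζ j) ⬝ᵥ ζ j).re = 0 then 0 else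
            ((star (ζ j) ⬝ᵥ (NA *ᵥ ζ j)).re) ^ 2 / (star (ζ j) ⬝ᵥ ζ j).re)
        = ∑ j, (if (∑ i, w j i) = 0 then 0 else
            (∑ i, w j i * E i) ^ 2 / (∑ i, w j i)) :=
          Finset.sum_congr rfl fun j _ => by rw [hre1 j, hre2 j]
      _ ≤ ∑ j, ∑ i, w j i * E i ^ 2 := Finset.sum_le_sum fun j _ => key j
      _ = ∑ i, p i * E i ^ 2 := hsum1
  refine ⟨main1, ?_⟩
  have eL : ∑ i, p i * (4 * (T i - E i ^ 2))
      = (∑ i, p i * T i) * 4 - (∑ i, p i * E i ^ 2) * 4 := by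
    rw [Finset.sum_mul, Finset.sum_mul, ← Finset.sum_sub_distrib]
    exact Finset.sum_congr rfl fun i _ => by ring
  have eR : ∑ j, ((star (ζ j) ⬝ᵥ ((NA * NA) *ᵥ ζ j)).re -
        (if (star (ζ j) ⬝ᵥ ζ j).re = 0 then 0 else
          ((star (ζ j) ⬝ᵥ (NA *ᵥ ζ j)).re) ^ 2 / (star (ζ j) ⬝ᵥ ζ j).re)) * 4
      = (∑ i, p i * T i) * 4
        - (∑ j, (if (star (ζ j) ⬝ᵥ ζ j).re = 0 then 0 else
            ((star (ζ j) ⬝ᵥ (NA *ᵥ ζ j)).re) ^ 2 / (star (ζ j) ⬝ᵥ ζ j).re)) * 4 := by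
    rw [← Finset.sum_mul, Finset.sum_sub_distrib, hNA2re, sub_mul, Finset.sum_mul]
  rw [eL, eR]
  have h4 : (∑ j, (if (star (ζ j) ⬝ᵥ ζ j).re = 0 then 0 else
      ((star (ζ j) ⬝ᵥ (NA *ᵥ ζ j)).re) ^ 2 / (star (ζ j) ⬝ᵥ ζ j).re)) ≤ ∑ i, p i * E i ^ 2 :=
    main1
  linarith
end

section
/- Let ρ = ⊕_i p_i|φ_i⟩⟨φ_i| and σ = ⊕_j q_j|ψ_j⟩⟨ψ_j| be direct sums of pure states (∑p_i = ∑q_j = 1) on bipartite Hilbert spaces with local particle number operators. Then V_F^SSR(ρ ⊗ σ) = V_F^SSR(ρ) + V_F^SSR(σ), where V_F^SSR(τ) = min over all decompositions τ = ∑ r_k |χ_k⟩⟨χ_k| into (unnormalized) pure states compatible with the superselection rule of ∑_k ⟨χ_k|χ_k⟩ · V(χ_k/‖χ_k‖), and V is the superselection induced variance. -/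
open Matrix Kronecker

/-- Outer product `|ψ⟩⟨ψ|`. -/
noncomputable def outer {ι : Type*} (ψ : ι → ℂ) : Matrix ι ι ℂ :=
  Matrix.of fun a b => ψ a * star (ψ b)

/-- Superselection induced variance of a normalized state, w.r.t. the local
particle number `nA`: `V = 4(⟨N_A²⟩ − ⟨N_A⟩²)`. -/
noncomputable def siv {ι : Type*} [Fintype ι] (nA : ι → ℕ) (ψ : ι → ℂ) : ℝ :=
  4 * ((∑ p, ((nA p : ℝ)) ^ 2 * Complex.normSq (ψ p)) -
       (∑ p, (nA p : ℝ) * Complex.normSq (ψ p)) ^ 2)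

/-- Variance of formation with superselection rules: infimum of the average
SiV over decompositions into normalized pure states of definite total
particle number `nTot`. -/
noncomputable def VFssr {ι : Type*} [Fintype ι] (nA nTot : ι → ℕ)
    (ρ : Matrix ι ι ℂ) : ℝ :=
  sInf {x : ℝ | ∃ (k : ℕ) (q : Fin k → ℝ) (ψ : Fin k → ι → ℂ),
    (∀ i, 0 ≤ q i) ∧ (∀ i, ∑ p, Complex.normSq (ψ i p) = 1) ∧
    (∀ i, ∃ c : ℕ, ∀ p, nTot p ≠ c → ψ i p = 0) ∧
    ρ = ∑ i, (q i : ℂ) • outer (ψ i) ∧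
    x = ∑ i, q i * siv nA (ψ i)}

-- helpers (already verified)
lemma sum_outer_apply {ι : Type*} {κ : Type*} [Fintype κ]
    (c : κ → ℝ) (w : κ → ι → ℂ) (a b : ι) :
    (∑ j, (c j : ℂ) • outer (w j)) a b = ∑ j, (c j : ℂ) * (w j a * star (w j b)) := by
  simp [outer, Matrix.sum_apply]

lemma triple {ι κ : Type*} [Fintype ι] [Fintype κ] (f g : ι → ℂ) (T : κ → ι → ι → ℂ) :
    ∑ a, f a * ∑ b, (∑ j, T j a b) * g b = ∑ j, ∑ a, ∑ b, f a * (T j a b * g b) := by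
  simp only [Finset.mul_sum, Finset.sum_mul]
  have h1 : ∀ a, ∑ b, ∑ j, f a * (T j a b * g b) = ∑ j, ∑ b, f a * (T j a b * g b) :=
    fun a => Finset.sum_comm
  simp_rw [h1]
  exact Finset.sum_comm

lemma quad {ι : Type*} [Fintype ι] {κ : Type*} [Fintype κ]
    (c : κ → ℝ) (w : κ → ι → ℂ) (u v : ι → ℂ) :
    star u ⬝ᵥ (∑ j, (c j : ℂ) • outer (w j)).mulVec v =
    ∑ j, (c j : ℂ) * ((star u ⬝ᵥ w j) * (star (w j) ⬝ᵥ v)) := by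
  have lhs : star u ⬝ᵥ (∑ j, (c j : ℂ) • outer (w j)).mulVec v =
      ∑ a, star (u a) * ∑ b, (∑ j, (c j : ℂ) * (w j a * star (w j b))) * v b := by
    simp only [dotProduct, mulVec, sum_outer_apply, Pi.star_apply]
  rw [lhs, triple (fun a => star (u a)) v (fun j a b => (c j : ℂ) * (w j a * star (w j b)))]
  refine Finset.sum_congr rfl fun j _ => ?_
  rw [dotProduct, dotProduct, Finset.sum_mul_sum, Finset.mul_sum]
  refine Finset.sum_congr rfl fun a _ => ?_
  rw [Finset.mul_sum]
  refine Finset.sum_congr rfl fun b _ => ?_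
  simp only [Pi.star_apply]
  ring

lemma dot_conj {ι : Type*} [Fintype ι] (u v : ι → ℂ) :
    star u ⬝ᵥ v = star (star v ⬝ᵥ u) := by
  simp only [dotProduct, star_sum, Pi.star_apply, star_mul', star_star]
  exact Finset.sum_congr rfl fun x _ => mul_comm _ _

lemma dot_star_self {ι : Type*} [Fintype ι] (u : ι → ℂ) :
    star u ⬝ᵥ u = ((∑ x, Complex.normSq (u x) : ℝ) : ℂ) := by
  push_cast
  exact Finset.sum_congr rfl fun x _ => (Complex.normSq_eq_conj_mul_self (z := u x)).symm

lemma dot_sum_right {ι κ : Type*} [Fintype ι] [Fintype κ] (u : ι → ℂ)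
    (a : κ → ℂ) (w : κ → ι → ℂ) :
    (star u ⬝ᵥ fun x => ∑ j, a j * w j x) = ∑ j, a j * (star u ⬝ᵥ w j) := by
  simp only [dotProduct, Finset.mul_sum]
  rw [Finset.sum_comm]
  exact Finset.sum_congr rfl fun j _ => Finset.sum_congr rfl fun x _ => by ring

lemma dot_sum_left {ι κ : Type*} [Fintype ι] [Fintype κ]
    (a : κ → ℂ) (w : κ → ι → ℂ) (v : ι → ℂ) :
    ((star fun x => ∑ j, a j * w j x) ⬝ᵥ v) = ∑ j, star (a j) * (star (w j) ⬝ᵥ v) := by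
  simp only [dotProduct, Pi.star_apply, star_sum, star_mul', Finset.sum_mul, Finset.mul_sum]
  rw [Finset.sum_comm]
  exact Finset.sum_congr rfl fun j _ => Finset.sum_congr rfl fun x _ => by ring

lemma wsum_expand {ι κ : Type*} [Fintype ι] [Fintype κ] (g : ι → ℂ)
    (a : κ → ℂ) (φ : κ → ι → ℂ) :
    ∑ x, g x * (star (∑ i, a i * φ i x) * (∑ i, a i * φ i x)) =
    ∑ i, ∑ i', star (a i) * a i' * ∑ x, g x * (star (φ i x) * φ i' x) := by
  have expand : ∀ x, g x * (star (∑ i, a i * φ i x) * (∑ i, a i * φ i x)) =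
      ∑ i, ∑ i', star (a i) * a i' * (g x * (star (φ i x) * φ i' x)) := by
    intro x
    rw [star_sum, Finset.sum_mul_sum, Finset.mul_sum]
    refine Finset.sum_congr rfl fun i _ => ?_
    rw [Finset.mul_sum]
    exact Finset.sum_congr rfl fun i' _ => by simp only [star_mul']; ring
  simp_rw [expand]
  have h1 : ∀ i, ∑ x, ∑ i', star (a i) * a i' * (g x * (star (φ i x) * φ i' x)) =
      ∑ i', ∑ x, star (a i) * a i' * (g x * (star (φ i x) * φ i' x)) :=
    fun i => Finset.sum_comm
  rw [Finset.sum_comm]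
  simp_rw [h1, ← Finset.mul_sum]

lemma VFssr_eq {ι : Type*} [Fintype ι] {κ : Type*} [Fintype κ] [DecidableEq κ] (nA nTot : ι → ℕ)
    (p : κ → ℝ) (hp : ∀ i, 0 ≤ p i) (hps : ∑ i, p i = 1)
    (φ : κ → ι → ℂ)
    (hφo : ∀ i i', star (φ i) ⬝ᵥ φ i' = if i = i' then 1 else 0)
    (hφssr : ∀ i, ∃ c : ℕ, ∀ x, nTot x ≠ c → φ i x = 0)
    (hφNA : ∀ i i', i ≠ i' → ∑ x, (nA x : ℂ) * (star (φ i x) * φ i' x) = 0)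
    (ρ : Matrix ι ι ℂ) (hρ : ρ = ∑ i, (p i : ℂ) • outer (φ i)) :
    VFssr nA nTot ρ = ∑ i, p i * siv nA (φ i) := by
  have hφnorm : ∀ i, ∑ x, Complex.normSq (φ i x) = 1 := by
    intro i
    have := (dot_star_self (φ i)).symm.trans (hφo i i)
    rw [if_pos rfl] at this
    exact_mod_cast this
  apply IsLeast.csInf_eq
  constructor
  · -- membership
    refine ⟨Fintype.card κ, p ∘ (Fintype.equivFin κ).symm, φ ∘ (Fintype.equivFin κ).symm,
      fun i => hp _, fun i => hφnorm _, fun i => hφssr _, ?_, ?_⟩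
    · rw [hρ]
      exact (Equiv.sum_comp (Fintype.equivFin κ).symm
        (fun i => (p i : ℂ) • outer (φ i))).symm
    · exact (Equiv.sum_comp (Fintype.equivFin κ).symm
        (fun i => p i * siv nA (φ i))).symm
  · -- lower bound
    rintro x ⟨k, q, χ, hq0, hnorm, -, hdec, rfl⟩
    -- abbreviations
    set n : κ → ℝ := fun i => ∑ x, (nA x : ℝ) * Complex.normSq (φ i x) with hn
    set s2φ : κ → ℝ := fun i => ∑ x, (nA x : ℝ) ^ 2 * Complex.normSq (φ i x) with hs2φ
    set S1 : Fin k → ℝ := fun j => ∑ x, (nA x : ℝ) * Complex.normSq (χ j x) with hS1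
    set S2 : Fin k → ℝ := fun j => ∑ x, (nA x : ℝ) ^ 2 * Complex.normSq (χ j x) with hS2
    set a : Fin k → κ → ℂ := fun j i => star (φ i) ⬝ᵥ χ j with ha
    have hbil : ∀ u v : ι → ℂ,
        ∑ i, (p i : ℂ) * ((star u ⬝ᵥ φ i) * (star (φ i) ⬝ᵥ v)) =
        ∑ j, (q j : ℂ) * ((star u ⬝ᵥ χ j) * (star (χ j) ⬝ᵥ v)) := by
      intro u v
      rw [← quad p φ u v, ← quad q χ u v, ← hρ, ← hdec]
    -- entrywise diagonal
    have hdiag : ∀ x, ∑ i, p i * Complex.normSq (φ i x) =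
        ∑ j, q j * Complex.normSq (χ j x) := by
      intro x
      have h := congrArg (fun M => M x x) (hρ.symm.trans hdec)
      simp only [sum_outer_apply] at h
      have h2 : ((∑ i, p i * Complex.normSq (φ i x) : ℝ) : ℂ) =
          ((∑ j, q j * Complex.normSq (χ j x) : ℝ) : ℂ) := by
        push_cast
        simpa only [Complex.star_def, Complex.mul_conj] using h
      exact_mod_cast h2
    -- second moments match
    have hsecond : ∑ j, q j * S2 j = ∑ i, p i * s2φ i := by
      have : ∀ f : ι → ℝ, ∑ j, q j * ∑ x, f x * Complex.normSq (χ j x) =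
          ∑ i, p i * ∑ x, f x * Complex.normSq (φ i x) := by
        intro f
        simp_rw [Finset.mul_sum]
        rw [Finset.sum_comm, Finset.sum_comm (s := Finset.univ) (t := Finset.univ)
          (f := fun i x => p i * (f x * Complex.normSq (φ i x)))]
        refine Finset.sum_congr rfl fun x _ => ?_
        have := hdiag x
        calc ∑ j, q j * (f x * Complex.normSq (χ j x))
            = f x * ∑ j, q j * Complex.normSq (χ j x) := by
              rw [Finset.mul_sum]; exact Finset.sum_congr rfl fun j _ => by ring
          _ = f x * ∑ i, p i * Complex.normSq (φ i x) := by rw [this]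
          _ = ∑ i, p i * (f x * Complex.normSq (φ i x)) := by
              rw [Finset.mul_sum]; exact Finset.sum_congr rfl fun i _ => by ring
      exact this (fun x => (nA x : ℝ) ^ 2)
    -- weights sum
    have hweight : ∀ i, ∑ j, q j * Complex.normSq (a j i) = p i := by
      intro i
      have h := hbil (φ i) (φ i)
      have hL : ∑ i', (p i' : ℂ) * ((star (φ i) ⬝ᵥ φ i') * (star (φ i') ⬝ᵥ φ i)) =
          (p i : ℂ) := by
        rw [Finset.sum_eq_single i]
        · rw [hφo i i, if_pos rfl]; ring
        · intro i' _ hne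
          rw [hφo i i', if_neg (fun hh => hne hh.symm)]; ring
        · intro hh; exact absurd (Finset.mem_univ i) hh
      rw [hL] at h
      have hR : ∀ j : Fin k, (q j : ℂ) * ((star (φ i) ⬝ᵥ χ j) * (star (χ j) ⬝ᵥ φ i)) =
          ((q j * Complex.normSq (a j i) : ℝ) : ℂ) := by
        intro j
        rw [dot_conj (χ j) (φ i), Complex.star_def, Complex.mul_conj]
        simp only [ha]
        push_cast
        ring
      rw [Finset.sum_congr rfl (fun j _ => hR j)] at h
      exact_mod_cast h.symm
    -- span: decomposition vectors lie in the span of the φ i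
    have hspan : ∀ j, q j ≠ 0 → χ j = fun x => ∑ i, a j i * φ i x := by
      intro j hqj
      set r : ι → ℂ := χ j - fun x => ∑ i, a j i * φ i x with hr
      have hφr : ∀ i, star (φ i) ⬝ᵥ r = 0 := by
        intro i
        rw [hr, dotProduct_sub, dot_sum_right]
        have : ∀ i', a j i' * (star (φ i) ⬝ᵥ φ i') = if i = i' then a j i else 0 := by
          intro i'
          rw [hφo i i']
          by_cases hee : i = i' <;> simp [hee]
        rw [Finset.sum_congr rfl (fun i' _ => this i'), Finset.sum_ite_eq]
        simp [ha]
      have hχjr : star (χ j) ⬝ᵥ r = 0 := by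
        have h := hbil r r
        have hL0 : ∑ i, (p i : ℂ) * ((star r ⬝ᵥ φ i) * (star (φ i) ⬝ᵥ r)) = 0 := by
          refine Finset.sum_eq_zero fun i _ => ?_
          rw [hφr i]; ring
        rw [hL0] at h
        have hR0 : ∀ j' : Fin k, (q j' : ℂ) * ((star r ⬝ᵥ χ j') * (star (χ j') ⬝ᵥ r)) =
            ((q j' * Complex.normSq (star (χ j') ⬝ᵥ r) : ℝ) : ℂ) := by
          intro j'
          rw [dot_conj r (χ j'), Complex.star_def, ← Complex.normSq_eq_conj_mul_self]
          push_cast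
          ring
        rw [Finset.sum_congr rfl (fun j' _ => hR0 j')] at h
        have h' : (0 : ℝ) = ∑ j', q j' * Complex.normSq (star (χ j') ⬝ᵥ r) := by
          exact_mod_cast h
        have hz : ∀ j' ∈ Finset.univ, (0:ℝ) ≤ q j' * Complex.normSq (star (χ j') ⬝ᵥ r) :=
          fun j' _ => mul_nonneg (hq0 j') (Complex.normSq_nonneg _)
        have := (Finset.sum_eq_zero_iff_of_nonneg hz).1 h'.symm j (Finset.mem_univ j)
        have hnsq : Complex.normSq (star (χ j) ⬝ᵥ r) = 0 := by
          rcases mul_eq_zero.1 this with h1 | h1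
          · exact absurd h1 hqj
          · exact h1
        exact Complex.normSq_eq_zero.1 hnsq
      have hrr : star r ⬝ᵥ r = 0 := by
        have hsplit : star r ⬝ᵥ r = star (χ j) ⬝ᵥ r -
            ((star fun x => ∑ i, a j i * φ i x) ⬝ᵥ r) := by
          rw [hr, star_sub, sub_dotProduct]
        rw [hsplit, hχjr, dot_sum_left]
        rw [Finset.sum_eq_zero fun i _ => by rw [hφr i]; ring]
        ring
      have hsum0 : ∑ x, Complex.normSq (r x) = 0 := by
        have := (dot_star_self r).symm.trans hrr
        exact_mod_cast this
      have hrx : ∀ x, r x = 0 := by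
        intro x
        have hnn : ∀ y ∈ Finset.univ, (0:ℝ) ≤ Complex.normSq (r y) :=
          fun y _ => Complex.normSq_nonneg _
        exact Complex.normSq_eq_zero.1
          ((Finset.sum_eq_zero_iff_of_nonneg hnn).1 hsum0 x (Finset.mem_univ x))
      funext x
      have := hrx x
      rw [hr] at this
      simpa [sub_eq_zero] using this
    -- Parseval and first moment for decomposition vectors
    have hD : ∀ j, q j ≠ 0 → (∑ i, Complex.normSq (a j i) = 1 ∧
        S1 j = ∑ i, Complex.normSq (a j i) * n i) := by
      intro j hqj
      have hχ := hspan j hqj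
      constructor
      · have h1 : ((1:ℝ):ℂ) = ∑ x, (1:ℂ) * (star (χ j x) * χ j x) := by
          have : ∀ x, (1:ℂ) * (star (χ j x) * χ j x) =
              ((Complex.normSq (χ j x) : ℝ) : ℂ) := by
            intro x
            rw [Complex.star_def, ← Complex.normSq_eq_conj_mul_self]
            ring
          rw [Finset.sum_congr rfl (fun x _ => this x)]
          rw [← Complex.ofReal_sum, hnorm j]
        have h2 : ∑ x, (1:ℂ) * (star (χ j x) * χ j x) =
            ∑ i, ((Complex.normSq (a j i) : ℝ) : ℂ) := by
          conv_lhs => rw [hχ]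
          rw [wsum_expand (fun _ => (1:ℂ)) (a j) φ]
          refine Finset.sum_congr rfl fun i _ => ?_
          rw [Finset.sum_eq_single i]
          · have : ∑ x, (1:ℂ) * (star (φ i x) * φ i x) = star (φ i) ⬝ᵥ φ i := by
              simp [dotProduct]
            rw [this, hφo i i, if_pos rfl, Complex.star_def,
              ← Complex.normSq_eq_conj_mul_self]
            ring
          · intro i' _ hne
            have : ∑ x, (1:ℂ) * (star (φ i x) * φ i' x) = star (φ i) ⬝ᵥ φ i' := by
              simp [dotProduct]
            rw [this, hφo i i', if_neg (fun hh => hne hh.symm)]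
            ring
          · intro hh; exact absurd (Finset.mem_univ i) hh
        have := h1.trans h2
        exact_mod_cast this.symm
      · have h1 : ((S1 j : ℝ):ℂ) = ∑ x, ((nA x : ℂ)) * (star (χ j x) * χ j x) := by
          have : ∀ x, ((nA x : ℂ)) * (star (χ j x) * χ j x) =
              (((nA x : ℝ) * Complex.normSq (χ j x) : ℝ) : ℂ) := by
            intro x
            rw [Complex.star_def, ← Complex.normSq_eq_conj_mul_self]
            push_cast
            ring
          rw [Finset.sum_congr rfl (fun x _ => this x), ← Complex.ofReal_sum, hS1]
        have h2 : ∑ x, ((nA x : ℂ)) * (star (χ j x) * χ j x) =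
            ∑ i, ((Complex.normSq (a j i) * n i : ℝ) : ℂ) := by
          conv_lhs => rw [hχ]
          rw [wsum_expand (fun x => (nA x : ℂ)) (a j) φ]
          refine Finset.sum_congr rfl fun i _ => ?_
          rw [Finset.sum_eq_single i]
          · have hni : ∑ x, ((nA x : ℂ)) * (star (φ i x) * φ i x) = ((n i : ℝ) : ℂ) := by
              have : ∀ x, ((nA x : ℂ)) * (star (φ i x) * φ i x) =
                  (((nA x : ℝ) * Complex.normSq (φ i x) : ℝ) : ℂ) := by
                intro x
                rw [Complex.star_def, ← Complex.normSq_eq_conj_mul_self]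
                push_cast
                ring
              rw [Finset.sum_congr rfl (fun x _ => this x), ← Complex.ofReal_sum, hn]
            rw [hni, Complex.star_def]
            rw [show (starRingEnd ℂ) (a j i) * a j i =
                ((Complex.normSq (a j i) : ℝ) : ℂ) from
              (Complex.normSq_eq_conj_mul_self).symm]
            push_cast
            ring
          · intro i' _ hne
            rw [hφNA i i' (fun hh => hne hh.symm)]
            ring
          · intro hh; exact absurd (Finset.mem_univ i) hh
        have := h1.trans h2
        have h3 : ((S1 j : ℝ):ℂ) = ((∑ i, Complex.normSq (a j i) * n i : ℝ) : ℂ) := by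
          rw [this]; push_cast; ring
        exact_mod_cast h3
    -- Jensen's inequality per decomposition vector
    have hJ : ∀ j, q j * S1 j ^ 2 ≤ q j * ∑ i, Complex.normSq (a j i) * n i ^ 2 := by
      intro j
      rcases eq_or_ne (q j) 0 with h0 | h0
      · simp [h0]
      · obtain ⟨hw1, hs⟩ := hD j h0
        have key : S1 j ^ 2 ≤ ∑ i, Complex.normSq (a j i) * n i ^ 2 := by
          rw [hs]
          have := Finset.sum_sq_le_sum_mul_sum_of_sq_eq_mul Finset.univ
            (r := fun i => Complex.normSq (a j i) * n i)
            (f := fun i => Complex.normSq (a j i))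
            (g := fun i => Complex.normSq (a j i) * n i ^ 2)
            (fun i _ => Complex.normSq_nonneg _)
            (fun i _ => mul_nonneg (Complex.normSq_nonneg _) (sq_nonneg _))
            (fun i _ => by ring)
          rw [hw1, one_mul] at this
          exact this
        exact mul_le_mul_of_nonneg_left key (hq0 j)
    -- sum of upper bounds
    have hsumw : ∑ j, q j * ∑ i, Complex.normSq (a j i) * n i ^ 2 =
        ∑ i, p i * n i ^ 2 := by
      simp_rw [Finset.mul_sum]
      rw [Finset.sum_comm]
      refine Finset.sum_congr rfl fun i _ => ?_
      have : ∀ j, q j * (Complex.normSq (a j i) * n i ^ 2) =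
          (q j * Complex.normSq (a j i)) * n i ^ 2 := fun j => by ring
      rw [Finset.sum_congr rfl (fun j _ => this j), ← Finset.sum_mul, hweight i]
    have hBC : ∑ j, q j * S1 j ^ 2 ≤ ∑ i, p i * n i ^ 2 :=
      (Finset.sum_le_sum fun j _ => hJ j).trans_eq hsumw
    -- final assembly
    have hxval : ∑ j, q j * siv nA (χ j) =
        4 * ((∑ j, q j * S2 j) - ∑ j, q j * S1 j ^ 2) := by
      have : ∀ j, q j * siv nA (χ j) = 4 * (q j * S2 j - q j * S1 j ^ 2) := by
        intro j
        simp only [siv, hS1, hS2]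
        ring
      rw [Finset.sum_congr rfl (fun j _ => this j), ← Finset.sum_sub_distrib,
        ← Finset.mul_sum]
    have htgt : ∑ i, p i * siv nA (φ i) =
        4 * ((∑ i, p i * s2φ i) - ∑ i, p i * n i ^ 2) := by
      have : ∀ i, p i * siv nA (φ i) = 4 * (p i * s2φ i - p i * n i ^ 2) := by
        intro i
        simp only [siv, hn, hs2φ]
        ring
      rw [Finset.sum_congr rfl (fun i _ => this i), ← Finset.sum_sub_distrib,
        ← Finset.mul_sum]
    rw [hxval, htgt, hsecond]
    linarith

lemma prod_sum_factor {ι₁ ι₂ : Type*} [Fintype ι₁] [Fintype ι₂] (F : ι₁ → ℂ) (G : ι₂ → ℂ) :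
    ∑ x : ι₁ × ι₂, F x.1 * G x.2 = (∑ a, F a) * (∑ b, G b) := by
  rw [Fintype.sum_prod_type]
  exact (Finset.sum_mul_sum _ _ _ _).symm

lemma siv_prod {ι₁ ι₂ : Type*} [Fintype ι₁] [Fintype ι₂] (nA₁ : ι₁ → ℕ) (nA₂ : ι₂ → ℕ)
    (φ : ι₁ → ℂ) (ψ : ι₂ → ℂ)
    (hφ : ∑ x, Complex.normSq (φ x) = 1) (hψ : ∑ x, Complex.normSq (ψ x) = 1) :
    siv (fun x : ι₁ × ι₂ => nA₁ x.1 + nA₂ x.2) (fun x => φ x.1 * ψ x.2) =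
    siv nA₁ φ + siv nA₂ ψ := by
  set A1 := ∑ a, (nA₁ a : ℝ) * Complex.normSq (φ a) with hA1
  set A2 := ∑ a, (nA₁ a : ℝ) ^ 2 * Complex.normSq (φ a) with hA2
  set B1 := ∑ b, (nA₂ b : ℝ) * Complex.normSq (ψ b) with hB1
  set B2 := ∑ b, (nA₂ b : ℝ) ^ 2 * Complex.normSq (ψ b) with hB2
  have h1 : ∑ x : ι₁ × ι₂, ((nA₁ x.1 + nA₂ x.2 : ℕ) : ℝ) *
      Complex.normSq (φ x.1 * ψ x.2) = A1 + B1 := by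
    rw [Fintype.sum_prod_type]
    have hrow : ∀ a, ∑ b, ((nA₁ a + nA₂ b : ℕ) : ℝ) * Complex.normSq (φ a * ψ b) =
        (nA₁ a : ℝ) * Complex.normSq (φ a) + Complex.normSq (φ a) * B1 := by
      intro a
      have : ∀ b, ((nA₁ a + nA₂ b : ℕ) : ℝ) * Complex.normSq (φ a * ψ b) =
          (nA₁ a : ℝ) * Complex.normSq (φ a) * Complex.normSq (ψ b) +
          Complex.normSq (φ a) * ((nA₂ b : ℝ) * Complex.normSq (ψ b)) := by
        intro b
        rw [Complex.normSq_mul]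
        push_cast
        ring
      rw [Finset.sum_congr rfl (fun b _ => this b), Finset.sum_add_distrib,
        ← Finset.mul_sum, ← Finset.mul_sum, hψ, ← hB1, mul_one]
    rw [Finset.sum_congr rfl (fun a _ => hrow a), Finset.sum_add_distrib,
      ← Finset.sum_mul, ← hA1, hφ, one_mul]
  have h2 : ∑ x : ι₁ × ι₂, ((nA₁ x.1 + nA₂ x.2 : ℕ) : ℝ) ^ 2 *
      Complex.normSq (φ x.1 * ψ x.2) = A2 + 2 * A1 * B1 + B2 := by
    rw [Fintype.sum_prod_type]
    have hrow : ∀ a, ∑ b, ((nA₁ a + nA₂ b : ℕ) : ℝ) ^ 2 * Complex.normSq (φ a * ψ b) =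
        (nA₁ a : ℝ) ^ 2 * Complex.normSq (φ a) +
        2 * ((nA₁ a : ℝ) * Complex.normSq (φ a)) * B1 +
        Complex.normSq (φ a) * B2 := by
      intro a
      have : ∀ b, ((nA₁ a + nA₂ b : ℕ) : ℝ) ^ 2 * Complex.normSq (φ a * ψ b) =
          (nA₁ a : ℝ) ^ 2 * Complex.normSq (φ a) * Complex.normSq (ψ b) +
          2 * ((nA₁ a : ℝ) * Complex.normSq (φ a)) * ((nA₂ b : ℝ) * Complex.normSq (ψ b)) +
          Complex.normSq (φ a) * ((nA₂ b : ℝ) ^ 2 * Complex.normSq (ψ b)) := by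
        intro b
        rw [Complex.normSq_mul]
        push_cast
        ring
      rw [Finset.sum_congr rfl (fun b _ => this b)]
      rw [Finset.sum_add_distrib, Finset.sum_add_distrib,
        ← Finset.mul_sum, ← Finset.mul_sum, ← Finset.mul_sum, hψ, ← hB1, ← hB2, mul_one]
    rw [Finset.sum_congr rfl (fun a _ => hrow a), Finset.sum_add_distrib,
      Finset.sum_add_distrib, ← hA2]
    have e2 : ∑ a, 2 * ((nA₁ a : ℝ) * Complex.normSq (φ a)) * B1 = 2 * A1 * B1 := by
      have : ∀ a, 2 * ((nA₁ a : ℝ) * Complex.normSq (φ a)) * B1 =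
          ((nA₁ a : ℝ) * Complex.normSq (φ a)) * (2 * B1) := fun a => by ring
      rw [Finset.sum_congr rfl (fun a _ => this a), ← Finset.sum_mul, ← hA1]
      ring
    have e3 : ∑ a, Complex.normSq (φ a) * B2 = B2 := by
      rw [← Finset.sum_mul, hφ, one_mul]
    rw [e2, e3]
  simp only [siv]
  rw [h1, h2]
  ring

lemma prod_sum_factor' {κ₁ κ₂ : Type*} [Fintype κ₁] [Fintype κ₂] (F : κ₁ → ℝ) (G : κ₂ → ℝ) :
    ∑ ij : κ₁ × κ₂, F ij.1 * G ij.2 = (∑ i, F i) * (∑ j, G j) := by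
  rw [Fintype.sum_prod_type]
  exact (Finset.sum_mul_sum _ _ _ _).symm


/-- Additivity of the variance of formation for states that are direct sums
of pure states: `V_F^SSR(ρ ⊗ σ) = V_F^SSR(ρ) + V_F^SSR(σ)`. -/
theorem vf_additive_direct_sum_of_pure
    {ι₁ ι₂ : Type*} [Fintype ι₁] [Fintype ι₂]
    (nA₁ nTot₁ : ι₁ → ℕ) (nA₂ nTot₂ : ι₂ → ℕ)
    {m₁ m₂ : ℕ}
    (p : Fin m₁ → ℝ) (hp : ∀ i, 0 ≤ p i) (hps : ∑ i, p i = 1)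
    (q : Fin m₂ → ℝ) (hq : ∀ j, 0 ≤ q j) (hqs : ∑ j, q j = 1)
    (φ : Fin m₁ → ι₁ → ℂ) (ψ : Fin m₂ → ι₂ → ℂ)
    (hφo : ∀ i i', star (φ i) ⬝ᵥ φ i' = if i = i' then 1 else 0)
    (hψo : ∀ j j', star (ψ j) ⬝ᵥ ψ j' = if j = j' then 1 else 0)
    (hφssr : ∀ i, ∃ c : ℕ, ∀ x, nTot₁ x ≠ c → φ i x = 0)
    (hψssr : ∀ j, ∃ c : ℕ, ∀ x, nTot₂ x ≠ c → ψ j x = 0)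
    (hφNA : ∀ i i', i ≠ i' →
      ∑ x, (nA₁ x : ℂ) * (star (φ i x) * φ i' x) = 0)
    (hψNA : ∀ j j', j ≠ j' →
      ∑ x, (nA₂ x : ℂ) * (star (ψ j x) * ψ j' x) = 0)
    (ρ : Matrix ι₁ ι₁ ℂ) (σ : Matrix ι₂ ι₂ ℂ)
    (hρ : ρ = ∑ i, (p i : ℂ) • outer (φ i))
    (hσ : σ = ∑ j, (q j : ℂ) • outer (ψ j)) :
    VFssr (fun x : ι₁ × ι₂ => nA₁ x.1 + nA₂ x.2)
        (fun x : ι₁ × ι₂ => nTot₁ x.1 + nTot₂ x.2) (ρ ⊗ₖ σ)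
      = VFssr nA₁ nTot₁ ρ + VFssr nA₂ nTot₂ σ := by
  classical
  have hφnorm : ∀ i, ∑ x, Complex.normSq (φ i x) = 1 := by
    intro i
    have := (dot_star_self (φ i)).symm.trans (hφo i i)
    rw [if_pos rfl] at this
    exact_mod_cast this
  have hψnorm : ∀ j, ∑ x, Complex.normSq (ψ j x) = 1 := by
    intro j
    have := (dot_star_self (ψ j)).symm.trans (hψo j j)
    rw [if_pos rfl] at this
    exact_mod_cast this
  have h1 : VFssr nA₁ nTot₁ ρ = ∑ i, p i * siv nA₁ (φ i) :=
    VFssr_eq nA₁ nTot₁ p hp hps φ hφo hφssr hφNA ρ hρ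
  have h2 : VFssr nA₂ nTot₂ σ = ∑ j, q j * siv nA₂ (ψ j) :=
    VFssr_eq nA₂ nTot₂ q hq hqs ψ hψo hψssr hψNA σ hσ
  -- the product family
  set Φ : Fin m₁ × Fin m₂ → ι₁ × ι₂ → ℂ :=
    fun ij x => φ ij.1 x.1 * ψ ij.2 x.2 with hΦ
  set P : Fin m₁ × Fin m₂ → ℝ := fun ij => p ij.1 * q ij.2 with hP
  have hPnn : ∀ ij, 0 ≤ P ij := fun ij => mul_nonneg (hp _) (hq _)
  have hPs : ∑ ij, P ij = 1 := by
    rw [hP, prod_sum_factor' p q, hps, hqs, one_mul]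
  have hdotfac : ∀ (i i' : Fin m₁) (j j' : Fin m₂),
      star (Φ (i, j)) ⬝ᵥ Φ (i', j') = (star (φ i) ⬝ᵥ φ i') * (star (ψ j) ⬝ᵥ ψ j') := by
    intro i i' j j'
    have : ∀ x : ι₁ × ι₂, star (Φ (i, j) x) * Φ (i', j') x =
        (star (φ i x.1) * φ i' x.1) * (star (ψ j x.2) * ψ j' x.2) := by
      intro x
      simp only [hΦ, star_mul']
      ring
    rw [show star (Φ (i, j)) ⬝ᵥ Φ (i', j') = ∑ x, star (Φ (i, j) x) * Φ (i', j') x from rfl]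
    rw [Finset.sum_congr rfl (fun x _ => this x),
      prod_sum_factor (fun x1 => star (φ i x1) * φ i' x1) (fun x2 => star (ψ j x2) * ψ j' x2)]
    rfl
  have hΦo : ∀ ij ij' : Fin m₁ × Fin m₂,
      star (Φ ij) ⬝ᵥ Φ ij' = if ij = ij' then 1 else 0 := by
    rintro ⟨i, j⟩ ⟨i', j'⟩
    rw [hdotfac, hφo, hψo]
    by_cases h1' : i = i' <;> by_cases h2' : j = j' <;>
      simp [h1', h2', Prod.ext_iff]
  have hΦssr : ∀ ij : Fin m₁ × Fin m₂, ∃ c : ℕ,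
      ∀ x : ι₁ × ι₂, nTot₁ x.1 + nTot₂ x.2 ≠ c → Φ ij x = 0 := by
    rintro ⟨i, j⟩
    obtain ⟨c1, hc1⟩ := hφssr i
    obtain ⟨c2, hc2⟩ := hψssr j
    refine ⟨c1 + c2, fun x hx => ?_⟩
    rcases eq_or_ne (nTot₁ x.1) c1 with h | h
    · rcases eq_or_ne (nTot₂ x.2) c2 with h' | h'
      · exact absurd (by rw [h, h']) hx
      · simp [hΦ, hc2 x.2 h']
    · simp [hΦ, hc1 x.1 h]
  have hΦNA : ∀ ij ij' : Fin m₁ × Fin m₂, ij ≠ ij' →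
      ∑ x : ι₁ × ι₂, ((nA₁ x.1 + nA₂ x.2 : ℕ) : ℂ) *
        (star (Φ ij x) * Φ ij' x) = 0 := by
    rintro ⟨i, j⟩ ⟨i', j'⟩ hne
    have hsplit : ∑ x : ι₁ × ι₂, ((nA₁ x.1 + nA₂ x.2 : ℕ) : ℂ) *
        (star (Φ (i, j) x) * Φ (i', j') x) =
        (∑ x1, (nA₁ x1 : ℂ) * (star (φ i x1) * φ i' x1)) * (star (ψ j) ⬝ᵥ ψ j') +
        (star (φ i) ⬝ᵥ φ i') * ∑ x2, (nA₂ x2 : ℂ) * (star (ψ j x2) * ψ j' x2) := by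
      have hterm : ∀ x : ι₁ × ι₂, ((nA₁ x.1 + nA₂ x.2 : ℕ) : ℂ) *
          (star (Φ (i, j) x) * Φ (i', j') x) =
          ((nA₁ x.1 : ℂ) * (star (φ i x.1) * φ i' x.1)) *
            (star (ψ j x.2) * ψ j' x.2) +
          (star (φ i x.1) * φ i' x.1) *
            ((nA₂ x.2 : ℂ) * (star (ψ j x.2) * ψ j' x.2)) := by
        intro x
        simp only [hΦ, star_mul']
        push_cast
        ring
      rw [Finset.sum_congr rfl (fun x _ => hterm x), Finset.sum_add_distrib,
        prod_sum_factor (fun x1 => (nA₁ x1 : ℂ) * (star (φ i x1) * φ i' x1))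
          (fun x2 => star (ψ j x2) * ψ j' x2),
        prod_sum_factor (fun x1 => star (φ i x1) * φ i' x1)
          (fun x2 => (nA₂ x2 : ℂ) * (star (ψ j x2) * ψ j' x2))]
      rfl
    rw [hsplit]
    rcases eq_or_ne i i' with hii | hii
    · have hjj : j ≠ j' := by
        intro hjj
        exact hne (by rw [hii, hjj])
      rw [hψo j j', if_neg hjj, hψNA j j' hjj, mul_zero, mul_zero, add_zero]
    · rw [hφNA i i' hii, hφo i i', if_neg hii, zero_mul, zero_mul, add_zero]
  have hKron : ρ ⊗ₖ σ = ∑ ij : Fin m₁ × Fin m₂, (P ij : ℂ) • outer (Φ ij) := by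
    apply Matrix.ext
    intro x y
    rw [Matrix.kroneckerMap_apply, hρ, hσ, sum_outer_apply, sum_outer_apply,
      sum_outer_apply, Finset.sum_mul_sum]
    rw [Fintype.sum_prod_type]
    refine Finset.sum_congr rfl fun i _ => Finset.sum_congr rfl fun j _ => ?_
    simp only [hΦ, hP, star_mul']
    push_cast
    ring
  have h3 : VFssr (fun x : ι₁ × ι₂ => nA₁ x.1 + nA₂ x.2)
      (fun x : ι₁ × ι₂ => nTot₁ x.1 + nTot₂ x.2) (ρ ⊗ₖ σ) =
      ∑ ij : Fin m₁ × Fin m₂, P ij * siv (fun x : ι₁ × ι₂ => nA₁ x.1 + nA₂ x.2) (Φ ij) :=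
    VFssr_eq _ _ P hPnn hPs Φ hΦo hΦssr hΦNA _ hKron
  rw [h1, h2, h3]
  have hsivp : ∀ ij : Fin m₁ × Fin m₂,
      siv (fun x : ι₁ × ι₂ => nA₁ x.1 + nA₂ x.2) (Φ ij) =
      siv nA₁ (φ ij.1) + siv nA₂ (ψ ij.2) := by
    intro ij
    exact siv_prod nA₁ nA₂ (φ ij.1) (ψ ij.2) (hφnorm ij.1) (hψnorm ij.2)
  rw [Finset.sum_congr rfl (fun ij _ => by rw [hsivp ij])]
  have expand : ∀ ij : Fin m₁ × Fin m₂,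
      P ij * (siv nA₁ (φ ij.1) + siv nA₂ (ψ ij.2)) =
      (p ij.1 * siv nA₁ (φ ij.1)) * q ij.2 + p ij.1 * (q ij.2 * siv nA₂ (ψ ij.2)) := by
    intro ij
    simp only [hP]
    ring
  rw [Finset.sum_congr rfl (fun ij _ => expand ij), Finset.sum_add_distrib,
    prod_sum_factor' (fun i => p i * siv nA₁ (φ i)) q,
    prod_sum_factor' p (fun j => q j * siv nA₂ (ψ j)), hqs, hps, mul_one, one_mul]
end
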